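/- arXiv:1710.03316 — 9 statements merged into one kernel-verified Lean document; each statement's English description precedes it below -/
import Mathlib

section
/- Let m = 2^d be a power of 2, n = m/2, and R = Z[ζ_m]. For x = Σ_{i=0}^{n-1} x_i ζ_m^i ∈ R with x_i ∈ Z, the adjusted canonical embedding ι : R → R^n satisfies ‖ι(x)‖ = √n · ‖(x_0,...,x_{n-1})‖, where the second norm is the Euclidean norm of the coefficient vector. -/
/-!
Let `v i = (σ (ζ ^ i))_σ`. As `σ ζ` lies on the unit circle, `conj (σ (ζ ^ j)) = σ (ζ ^ (-j))`,
so `⟪v i, v j⟫ = ∑_σ σ (ζ ^ (i - j))`. For `i = j` this is the number of embeddings,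
`φ (2 n) = n`. For `i ≠ j` we have `0 < |i - j| < n`, so `y = ζ ^ (i - j)` is neither `1` nor
`-1`; then `y ^ 2 ^ k = -1` for some `k ≥ 1`, and the automorphism `ζ ↦ ζ ^ (2 ^ k + 1)` of `K`
sends `y` to `-y`, which forces `∑_σ σ y = 0`. Hence the `v i` are pairwise orthogonal of squared
length `n`, and `‖∑ x i • v i‖² = n ∑ x i ^ 2`.
-/

theorem exists_pow_two_pow_eq_neg_one {R : Type*} [Ring R] [NoZeroDivisors R] {y : R} :
    ∀ {d : ℕ}, y ^ 2 ^ d = 1 → y ≠ 1 → ∃ k < d, y ^ 2 ^ k = -1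
  | 0, h, h1 => absurd (by simpa using h) h1
  | d + 1, h, h1 => by
    by_cases hsq : y ^ 2 = 1
    · exact ⟨0, d.succ_pos, by simpa using (sq_eq_one_iff.1 hsq).resolve_left h1⟩
    · rw [pow_succ', pow_mul] at h
      obtain ⟨k, hk, hy⟩ := exists_pow_two_pow_eq_neg_one h hsq
      exact ⟨k + 1, by omega, by rwa [pow_succ', pow_mul]⟩

theorem conj_apply_eq_apply_inv {K : Type*} [DivisionRing K] {σ : K →+* ℂ} {x : K} {m : ℕ}
    (hx : x ^ m = 1) (hm : m ≠ 0) : starRingEnd ℂ (σ x) = σ x⁻¹ := by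
  rw [map_inv₀, Complex.inv_eq_conj (Complex.norm_eq_one_of_pow_eq_one
    (by rw [← map_pow, hx, map_one]) hm)]

theorem sum_norm_sq_sum_mul_of_orthogonal {ι S : Type*} [Fintype ι] [DecidableEq ι] [Fintype S]
    {v : ι → S → ℂ} {c : ℝ}
    (hv : ∀ i j, ∑ s, v i s * starRingEnd ℂ (v j s) = if i = j then (c : ℂ) else 0)
    (x : ι → ℝ) : ∑ s, ‖∑ i, (x i : ℂ) * v i s‖ ^ 2 = c * ∑ i, x i ^ 2 := by
  apply Complex.ofReal_injective
  push_cast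
  calc ∑ s, ((‖∑ i, (x i : ℂ) * v i s‖ : ℝ) : ℂ) ^ 2
      = ∑ s, (∑ i, (x i : ℂ) * v i s) * starRingEnd ℂ (∑ j, (x j : ℂ) * v j s) := by
        simp only [Complex.mul_conj, Complex.normSq_eq_norm_sq, Complex.ofReal_pow]
    _ = ∑ s, ∑ i, ∑ j, (x i : ℂ) * x j * (v i s * starRingEnd ℂ (v j s)) := by
        simp only [map_sum, map_mul, Complex.conj_ofReal, Finset.sum_mul_sum]
        exact Finset.sum_congr rfl fun s _ => Finset.sum_congr rfl fun i _ =>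
          Finset.sum_congr rfl fun j _ => by ring
    _ = ∑ i, ∑ j, (x i : ℂ) * x j * ∑ s, v i s * starRingEnd ℂ (v j s) := by
        rw [Finset.sum_comm]
        simp only [Finset.mul_sum]
        exact Finset.sum_congr rfl fun i _ => Finset.sum_comm
    _ = c * ∑ i, (x i : ℂ) ^ 2 := by
        simp only [hv, mul_ite, mul_zero, Finset.sum_ite_eq, Finset.mem_univ, if_true,
          Finset.mul_sum]
        exact Finset.sum_congr rfl fun i _ => by ring

section NumberField

variable {K : Type*} [Field K] [NumberField K]

theorem sum_embeddings_algHom_apply (φ : K →ₐ[ℚ] K) (a : K) :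
    ∑ σ : K →+* ℂ, σ (φ a) = ∑ σ : K →+* ℂ, σ a := by
  have hφ : Function.Surjective φ := (Algebra.IsAlgebraic.algHom_bijective φ).2
  have hcomp : Function.Bijective fun σ : K →+* ℂ => σ.comp (φ : K →+* K) :=
    Finite.injective_iff_bijective.1 fun σ₁ σ₂ h =>
      RingHom.ext fun k => by
        obtain ⟨k, rfl⟩ := hφ k
        exact DFunLike.congr_fun h k
  exact Fintype.sum_bijective _ hcomp _ _ fun σ => rfl

theorem sum_embeddings_eq_zero_of_algHom_apply_eq_neg {φ : K →ₐ[ℚ] K} {a : K} (h : φ a = -a) :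
    ∑ σ : K →+* ℂ, σ a = 0 := by
  have := sum_embeddings_algHom_apply φ a
  simp only [h, map_neg, Finset.sum_neg_distrib] at this
  exact CharZero.neg_eq_self_iff.1 this

end NumberField

namespace IsPrimitiveRoot

section Cyclotomic

variable {K : Type*} [Field K] {m : ℕ} [NeZero m] {ζ : K}

theorem isCyclotomicExtension_of_adjoin_eq_top {A : Type*} [CommRing A] [Algebra A K]
    (hζ : IsPrimitiveRoot ζ m) (hK : Algebra.adjoin A ({ζ} : Set K) = ⊤) :
    IsCyclotomicExtension {m} A K := by
  rw [IsCyclotomicExtension.iff_adjoin_eq_top]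
  refine ⟨fun k hk _ => ⟨ζ, Set.mem_singleton_iff.1 hk ▸ hζ⟩, top_le_iff.1 ?_⟩
  rw [← hK]
  exact Algebra.adjoin_mono (Set.singleton_subset_iff.2 ⟨m, rfl, NeZero.ne m, hζ.pow_eq_one⟩)

variable [CharZero K]

theorem finrank_eq_totient_of_adjoin_eq_top (hζ : IsPrimitiveRoot ζ m)
    (hK : Algebra.adjoin ℚ ({ζ} : Set K) = ⊤) : Module.finrank ℚ K = m.totient := by
  have := hζ.isCyclotomicExtension_of_adjoin_eq_top hK
  exact IsCyclotomicExtension.finrank K (Polynomial.cyclotomic.irreducible_rat (NeZero.pos m))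

theorem exists_algHom_apply_eq_pow (hζ : IsPrimitiveRoot ζ m)
    (hK : Algebra.adjoin ℚ ({ζ} : Set K) = ⊤) {u : ℕ} (hu : u.Coprime m) :
    ∃ φ : K →ₐ[ℚ] K, φ ζ = ζ ^ u := by
  have := hζ.isCyclotomicExtension_of_adjoin_eq_top hK
  have hirr := Polynomial.cyclotomic.irreducible_rat (NeZero.pos m)
  have hmem : ζ ^ u ∈ primitiveRoots m K :=
    (mem_primitiveRoots (NeZero.pos m)).2 (hζ.pow_of_coprime u hu)
  exact ⟨(hζ.embeddingsEquivPrimitiveRoots K hirr).symm ⟨_, hmem⟩,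
    congrArg Subtype.val ((hζ.embeddingsEquivPrimitiveRoots K hirr).apply_symm_apply _)⟩

end Cyclotomic

variable {K : Type*} [Field K] {d : ℕ} {ζ : K}

theorem two_pow_dvd_of_zpow_eq_one_or_neg_one (hζ : IsPrimitiveRoot ζ (2 ^ (d + 1))) {k : ℤ}
    (h : ζ ^ k = 1 ∨ ζ ^ k = -1) : (2 ^ d : ℤ) ∣ k := by
  have hdvd : (2 ^ d : ℤ) ∣ 2 ^ (d + 1) := pow_dvd_pow 2 d.le_succ
  rcases h with h | h
  · exact hdvd.trans (by exact_mod_cast (hζ.zpow_eq_one_iff_dvd k).1 h)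
  · have hhalf : ζ ^ (2 ^ d : ℤ) = -1 := by
      have := hζ.pow_of_dvd (p := 2 ^ d) (by positivity) (pow_dvd_pow 2 d.le_succ)
      rw [pow_succ, Nat.mul_div_cancel_left _ (by positivity)] at this
      exact_mod_cast this.eq_neg_one_of_two_right
    have : ζ ^ (k - 2 ^ d) = 1 := by
      rw [zpow_sub₀ (hζ.ne_zero (by positivity)), h, hhalf, div_self (by norm_num)]
    have := hdvd.trans (by exact_mod_cast (hζ.zpow_eq_one_iff_dvd _).1 this)
    simpa using this.add (dvd_refl _)

variable [NumberField K]

theorem sum_embeddings_zpow_eq_zero (hζ : IsPrimitiveRoot ζ (2 ^ (d + 1)))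
    (hK : Algebra.adjoin ℚ ({ζ} : Set K) = ⊤) {k : ℤ} (h1 : ζ ^ k ≠ 1) (h2 : ζ ^ k ≠ -1) :
    ∑ σ : K →+* ℂ, σ (ζ ^ k) = 0 := by
  have hpow : (ζ ^ k) ^ 2 ^ (d + 1) = 1 := by
    rw [← zpow_natCast, ← zpow_mul, mul_comm, zpow_mul, zpow_natCast, hζ.pow_eq_one, one_zpow]
  obtain ⟨j, -, hj⟩ := exists_pow_two_pow_eq_neg_one hpow h1
  have hj0 : j ≠ 0 := by
    rintro rfl
    exact h2 (by simpa using hj)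
  have hodd : Odd (2 ^ j + 1) := (Nat.even_pow.2 ⟨even_two, hj0⟩).add_one
  obtain ⟨φ, hφ⟩ := hζ.exists_algHom_apply_eq_pow hK (hodd.coprime_two_right.pow_right _)
  refine sum_embeddings_eq_zero_of_algHom_apply_eq_neg (φ := φ) ?_
  rw [map_zpow₀, hφ, ← zpow_natCast, ← zpow_mul, mul_comm, zpow_mul, zpow_natCast, pow_succ, hj,
    neg_one_mul]

theorem sum_embeddings_pow_mul_conj_pow (hζ : IsPrimitiveRoot ζ (2 ^ (d + 1)))
    (hK : Algebra.adjoin ℚ ({ζ} : Set K) = ⊤) (i j : Fin (2 ^ d)) :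
    ∑ σ : K →+* ℂ, σ (ζ ^ (i : ℕ)) * starRingEnd ℂ (σ (ζ ^ (j : ℕ))) =
      if i = j then ((2 ^ d : ℝ) : ℂ) else 0 := by
  have hconj (σ : K →+* ℂ) : starRingEnd ℂ (σ (ζ ^ (j : ℕ))) = σ (ζ ^ (j : ℕ))⁻¹ :=
    conj_apply_eq_apply_inv (by rw [← pow_mul, mul_comm, pow_mul, hζ.pow_eq_one, one_pow])
      (by positivity : 2 ^ (d + 1) ≠ 0)
  have hdiv : ζ ^ (i : ℕ) * (ζ ^ (j : ℕ))⁻¹ = ζ ^ ((i : ℤ) - j) := by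
    rw [zpow_sub₀ (hζ.ne_zero (by positivity)), zpow_natCast, zpow_natCast, div_eq_mul_inv]
  simp only [hconj, ← map_mul, hdiv]
  split_ifs with hij
  · subst hij
    rw [sub_self, zpow_zero]
    simp [NumberField.Embeddings.card, hζ.finrank_eq_totient_of_adjoin_eq_top hK,
      Nat.totient_prime_pow_succ Nat.prime_two]
  · have hne : (i : ℤ) - j ≠ 0 := by
      have := Fin.val_ne_of_ne hij
      omega
    have hlt : |(i : ℤ) - j| < 2 ^ d := by
      rw [abs_lt]
      constructor <;> linarith [i.isLt, j.isLt]
    refine sum_embeddings_zpow_eq_zero hζ hK ?_ ?_ <;> intro h <;>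
      exact hne (Int.eq_zero_of_abs_lt_dvd
        (hζ.two_pow_dvd_of_zpow_eq_one_or_neg_one (by simp [h])) hlt)

end IsPrimitiveRoot

/-- For `m = 2^d`, `n = m/2`, `K = ℚ(ζ_m)` and `x = ∑ x_i ζ^i` with integer coefficients,
the adjusted canonical embedding satisfies `‖ι(x)‖ = √n · ‖(x_0,…,x_{n-1})‖`, where
`‖ι(x)‖² = ∑_{σ : K →+* ℂ} |σ(x)|²`. -/
theorem stmt_0 (d : ℕ) (hd : 1 ≤ d) (m n : ℕ) (hm : m = 2 ^ d) (hn : n = m / 2)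
    (K : Type) [Field K] [NumberField K] (ζ : K) (hζ : IsPrimitiveRoot ζ m)
    (hK : Algebra.adjoin ℚ ({ζ} : Set K) = ⊤) (x : Fin n → ℤ) :
    Real.sqrt (∑ σ : K →+* ℂ, ‖σ (∑ i : Fin n, (x i : K) * ζ ^ (i : ℕ))‖ ^ 2) =
      Real.sqrt n * Real.sqrt (∑ i : Fin n, (x i : ℝ) ^ 2) := by
  obtain ⟨d, rfl⟩ : ∃ e, d = e + 1 := ⟨d - 1, by omega⟩
  subst hm
  obtain rfl : n = 2 ^ d := by rw [hn, pow_succ, Nat.mul_div_cancel _ two_pos]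
  have key := sum_norm_sq_sum_mul_of_orthogonal (hζ.sum_embeddings_pow_mul_conj_pow hK)
    fun i => (x i : ℝ)
  simp only [Complex.ofReal_intCast] at key
  simp only [map_sum, map_mul, map_intCast, key, Nat.cast_pow, Nat.cast_ofNat]
  exact Real.sqrt_mul (by positivity) _
end

section
/- Let q be an odd prime and δ ∈ F_{q^2} \ F_q. The F_q-linear map f_δ : F_{q^2} → V^2 defined by f_δ(a) = (a^q − a, (aδ)^q − aδ), where V = {x ∈ F_{q^2} : x^q = −x}, is injective, and hence an isomorphism of F_q-vector spaces onto V × V. -/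
/-!
The map `x ↦ x ^ q` is an involutive field automorphism `σ` of `𝔽_{q²}`, and the statement holds
for any such involution `σ` of a field and any `δ` with `σ δ ≠ δ`. If `σ a = a` and
`σ (a δ) = a δ`, then `a (σ δ - δ) = 0`, so `a = 0`. Conversely, for `u, v` anti-fixed by `σ`,
solving the two linear equations gives the preimage `a = (v - u σ δ) / (σ δ - δ)`.
-/

namespace RingHom

theorem injective_sub_self_prod_sub_self {R : Type*} [CommRing R] [NoZeroDivisors R]
    (σ : R →+* R) {δ : R} (hδ : σ δ ≠ δ) :
    Function.Injective (fun a : R => (σ a - a, σ (a * δ) - a * δ)) := by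
  intro a b hab
  obtain ⟨h₁, h₂⟩ := Prod.mk.inj hab
  rw [map_mul, map_mul] at h₂
  have hfactor : (a - b) * (σ δ - δ) = 0 := by linear_combination h₂ - σ δ * h₁
  simpa [sub_eq_zero, hδ] using hfactor

theorem range_sub_self_prod_sub_self {K : Type*} [Field K] (σ : K →+* K) {δ : K}
    (hσ : Function.Involutive σ) (hδ : σ δ ≠ δ) :
    Set.range (fun a : K => (σ a - a, σ (a * δ) - a * δ)) =
      {p : K × K | σ p.1 = -p.1 ∧ σ p.2 = -p.2} := by
  ext ⟨u, v⟩
  simp only [Set.mem_range, Set.mem_ofPred_eq, Prod.mk.injEq]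
  constructor
  · rintro ⟨a, rfl, rfl⟩
    simp only [map_sub, hσ _]
    exact ⟨by ring, by ring⟩
  · rintro ⟨hu, hv⟩
    have hd : σ δ - δ ≠ 0 := sub_ne_zero.mpr hδ
    have hσa : σ ((v - u * σ δ) / (σ δ - δ)) = (v - u * δ) / (σ δ - δ) := by
      rw [map_div₀, map_sub, map_mul, map_sub, hu, hv, hσ δ,
        div_eq_div_iff (sub_ne_zero.mpr hδ.symm) hd]
      ring
    refine ⟨(v - u * σ δ) / (σ δ - δ), ?_, ?_⟩
    · rw [hσa]; field_simp; ring
    · rw [map_mul, hσa]; field_simp; ring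

end RingHom

theorem FiniteField.exists_involutive_ringHom_pow_of_card_eq_sq {F : Type*} [Field F] [Fintype F]
    {q : ℕ} (hF : Fintype.card F = q ^ 2) :
    ∃ σ : F →+* F, (∀ x, σ x = x ^ q) ∧ Function.Involutive σ := by
  obtain ⟨p, _⟩ := CharP.exists F
  obtain ⟨n, hp, hn⟩ := FiniteField.card F p
  have : Fact p.Prime := ⟨hp⟩
  -- `q ∣ q ^ 2 = p ^ n`, so `q` is itself a power of the characteristic
  obtain ⟨m, -, rfl⟩ := (Nat.dvd_prime_pow hp).mp (hn ▸ hF ▸ dvd_pow_self q two_ne_zero)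
  refine ⟨iterateFrobenius F p m, iterateFrobenius_def p m, fun x => ?_⟩
  simp only [iterateFrobenius_def, ← pow_mul, ← sq, ← hF, FiniteField.pow_card]

theorem stmt_1_general (q : ℕ) (F : Type) [Field F] [Fintype F]
    (hF : Fintype.card F = q ^ 2) (δ : F) (hδ : δ ^ q ≠ δ) :
    Function.Injective (fun a : F => (a ^ q - a, (a * δ) ^ q - a * δ)) ∧
      Set.range (fun a : F => (a ^ q - a, (a * δ) ^ q - a * δ)) =
        {p : F × F | p.1 ^ q = -p.1 ∧ p.2 ^ q = -p.2} := by
  obtain ⟨σ, hσq, hσ⟩ := FiniteField.exists_involutive_ringHom_pow_of_card_eq_sq hF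
  simp only [← hσq] at hδ ⊢
  exact ⟨σ.injective_sub_self_prod_sub_self hδ, σ.range_sub_self_prod_sub_self hσ hδ⟩

/-- For `q` an odd prime, `F = 𝔽_{q²}` and `δ ∈ F \ 𝔽_q`, the `𝔽_q`-linear map
`a ↦ (a^q − a, (aδ)^q − aδ)` is injective, with range `V × V` where
`V = {x : x^q = −x}`. -/
theorem stmt_1 (q : ℕ) (hq : q.Prime) (hodd : Odd q) (F : Type) [Field F] [Fintype F]
    (hF : Fintype.card F = q ^ 2) (δ : F) (hδ : δ ^ q ≠ δ) :
    Function.Injective (fun a : F => (a ^ q - a, (a * δ) ^ q - a * δ)) ∧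
      Set.range (fun a : F => (a ^ q - a, (a * δ) ^ q - a * δ)) =
        {p : F × F | p.1 ^ q = -p.1 ∧ p.2 ^ q = -p.2} :=
  stmt_1_general q F hF δ hδ
end

section
/- Let q be an odd prime, A_q = F_{q^2} \ F_q, and fix δ ∈ A_q. If a is uniformly distributed on A_q, then for any c, d ∈ V = {x : x^q = −x} with c ≠ 0, the probability that (a^q − a, (aδ)^q − aδ) = (c, d) equals 1/(q(q−1)). -/
/-!
The Frobenius `σ x = x ^ q` is an involution of `𝔽_{q²}` whose fixed points are the `q` elements
of `𝔽_q`. Substituting `σ a = a + c` into `σ a σ δ - a δ = d` leaves a linear equation for `a`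
with coefficient `σ δ - δ ≠ 0`, so exactly one `a` satisfies both conditions, and it lies outside
`𝔽_q` because `c ≠ 0`. The probability is therefore `1 / (q² - q)`.
-/

open Finset Polynomial

theorem card_filter_pow_char_eq_self (K : Type*) [Field K] [Fintype K] [DecidableEq K]
    (p : ℕ) [hp : Fact p.Prime] [CharP K p] : #{x : K | x ^ p = x} = p := by
  apply le_antisymm
  · have hroots : (univ.filter fun x : K => x ^ p = x).val ⊆ (X ^ p - X : K[X]).roots := by
      intro x hx
      rw [mem_roots (FiniteField.X_pow_card_sub_X_ne_zero K hp.out.one_lt)]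
      simpa [sub_eq_zero] using (mem_filter.mp hx).2
    simpa [FiniteField.X_pow_card_sub_X_natDegree_eq K hp.out.one_lt] using
      card_le_degree_of_subset_roots hroots
  · let ι := ZMod.castHom (dvd_refl p) K
    calc p = #(univ.image ι) := by
          rw [card_image_of_injective _ ι.injective, card_univ, ZMod.card]
      _ ≤ _ := card_le_card fun x hx => by
          obtain ⟨y, -, rfl⟩ := mem_image.mp hx
          simp only [mem_filter, mem_univ, true_and, ← map_pow, ZMod.pow_card]

theorem card_filter_pow_char_ne_self (K : Type*) [Field K] [Fintype K] [DecidableEq K]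
    (p : ℕ) [Fact p.Prime] [CharP K p] : #{x : K | x ^ p ≠ x} = Fintype.card K - p := by
  have hsplit := card_filter_add_card_filter_not (s := univ) fun x : K => x ^ p = x
  rw [card_filter_pow_char_eq_self, card_univ] at hsplit
  simp only [ne_eq]
  omega

theorem frobenius_involutive_of_card_eq_sq {K : Type*} [Field K] [Fintype K] (p : ℕ)
    [Fact p.Prime] [CharP K p] (hK : Fintype.card K = p ^ 2) :
    Function.Involutive (frobenius K p) := fun x => by
  rw [frobenius_def, frobenius_def, ← pow_mul, ← sq, ← hK, FiniteField.pow_card]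

theorem RingHom.sub_eq_and_sub_mul_eq_iff {K : Type*} [Field K] (σ : K →+* K)
    (hσ : Function.Involutive σ) {δ c d : K} (hδ : σ δ ≠ δ) (hc : σ c = -c) (hd : σ d = -d)
    (a : K) : σ a - a = c ∧ σ (a * δ) - a * δ = d ↔ a = (d - c * σ δ) / (σ δ - δ) := by
  have he : σ δ - δ ≠ 0 := sub_ne_zero.mpr hδ
  constructor
  · rintro ⟨h₁, h₂⟩
    rw [eq_div_iff he]
    rw [map_mul, show σ a = a + c by linear_combination h₁] at h₂
    linear_combination h₂
  · rintro rfl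
    have hσa : σ ((d - c * σ δ) / (σ δ - δ)) = (d - c * δ) / (σ δ - δ) := by
      rw [map_div₀, map_sub, map_sub, map_mul, hc, hd, hσ δ, ← neg_sub (σ δ), div_neg, ← neg_div]
      ring
    rw [map_mul, hσa]
    constructor <;> field_simp <;> ring

theorem stmt_2_general (q : ℕ) (hq : q.Prime) (F : Type) [Field F] [Fintype F]
    [DecidableEq F] (hF : Fintype.card F = q ^ 2) (δ : F) (hδ : δ ^ q ≠ δ)
    (c d : F) (hc : c ^ q = -c) (hc0 : c ≠ 0) (hd : d ^ q = -d) :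
    ((Finset.univ.filter
        (fun a : F => a ^ q ≠ a ∧ a ^ q - a = c ∧ (a * δ) ^ q - a * δ = d)).card : ℝ) /
      ((Finset.univ.filter (fun a : F => a ^ q ≠ a)).card : ℝ) = 1 / ((q : ℝ) * ((q : ℝ) - 1)) := by
  have : Fact q.Prime := ⟨hq⟩
  have : CharP F q := charP_of_card_eq_prime_pow hF
  have hsol := (frobenius F q).sub_eq_and_sub_mul_eq_iff
    (frobenius_involutive_of_card_eq_sq q hF) hδ hc hd
  simp only [frobenius_def] at hsol
  have hnum : #{a : F | a ^ q ≠ a ∧ a ^ q - a = c ∧ (a * δ) ^ q - a * δ = d} = 1 := by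
    refine card_eq_one.mpr ⟨(d - c * δ ^ q) / (δ ^ q - δ), ?_⟩
    ext a
    rw [mem_filter, mem_singleton, ← hsol a, and_iff_right (mem_univ a)]
    exact ⟨fun h => h.2, fun h => ⟨fun hfix => hc0 (by rw [← h.1, hfix, sub_self]), h⟩⟩
  rw [hnum, card_filter_pow_char_ne_self, hF, Nat.cast_sub (Nat.le_self_pow two_ne_zero q),
    Nat.cast_pow, Nat.cast_one, sq, ← mul_sub_one]

/-- For `q` an odd prime, `F = 𝔽_{q²}`, `δ ∈ A_q = F \ 𝔽_q`, and `c, d ∈ V = {x : x^q = −x}`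
with `c ≠ 0`: if `a` is uniform on `A_q` then
`P((a^q − a, (aδ)^q − aδ) = (c,d)) = 1/(q(q−1))`. -/
theorem stmt_2 (q : ℕ) (hq : q.Prime) (hodd : Odd q) (F : Type) [Field F] [Fintype F]
    [DecidableEq F] (hF : Fintype.card F = q ^ 2) (δ : F) (hδ : δ ^ q ≠ δ)
    (c d : F) (hc : c ^ q = -c) (hc0 : c ≠ 0) (hd : d ^ q = -d) :
    ((Finset.univ.filter
        (fun a : F => a ^ q ≠ a ∧ a ^ q - a = c ∧ (a * δ) ^ q - a * δ = d)).card : ℝ) /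
      ((Finset.univ.filter (fun a : F => a ^ q ≠ a)).card : ℝ) = 1 / ((q : ℝ) * ((q : ℝ) - 1)) :=
  stmt_2_general q hq F hF δ hδ c d hc hc0 hd
end

section
/- Let q be an odd prime, A_q = F_{q^2} \ F_q, δ ∈ A_q, and s_0 ∈ F_q. Let a be uniform on A_q and e any F_{q^2}-valued random variable independent of a. Then the random variable m_δ = ((aδ)^q − aδ)/(a^q − a) + s_0 + (e^q − e)/(a^q − a) is uniformly distributed on F_q. -/
/-!
Write `𝔽_q` for the Frobenius-fixed elements and put `c = z - s₀ ∈ 𝔽_q`, `d = δ - c ∉ 𝔽_q`.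
Clearing the denominator `a^q - a`, one finds `m_δ = z` iff `a d + e ∈ 𝔽_q`. For fixed `e` the
solutions `a` form the translate `d⁻¹ (𝔽_q - e)`, which has `q` elements, exactly one of them
in `𝔽_q` because `1, d` are independent over `𝔽_q`. So for every value of `e` exactly `q - 1` of
the `q² - q` elements of `A_q` give `m_δ = z`.
-/

open Finset

theorem card_filter_pow_eq_self (F : Type*) [Field F] [Fintype F] [DecidableEq F]
    (p : ℕ) [Fact p.Prime] [CharP F p] : #{x : F | x ^ p = x} = p := by
  rw [← Fintype.card_subtype, ← Nat.card_eq_fintype_card]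
  exact (Nat.card_congr (Equiv.subtypeEquivRight fun x =>
    (Subfield.mem_bot_iff_pow_eq_self F p).symm)).trans (Subfield.card_bot F p)

section FrobeniusFixed

variable {F : Type*} [Field F] {q : ℕ} [Fact q.Prime] [CharP F q]

theorem card_filter_mul_add_pow_eq_self [Fintype F] [DecidableEq F] {d : F} (hd : d ≠ 0)
    (e : F) :
    #{a : F | (a * d + e) ^ q = a * d + e} = q := by
  refine (card_nbij' (fun a => a * d + e) (fun x => (x - e) / d) ?_ ?_ ?_ ?_).trans
    (card_filter_pow_eq_self F q) <;> intro x hx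
  · simpa using hx
  · simpa [div_mul_cancel₀ _ hd] using hx
  · simp [hd]
  · simp [hd]

theorem existsUnique_pow_eq_self_and_mul_add_pow_eq_self [Fintype F]
    (hF : Fintype.card F = q ^ 2) {d : F} (hd : d ^ q ≠ d) (e : F) :
    ∃! a : F, a ^ q = a ∧ (a * d + e) ^ q = a * d + e := by
  have frob_frob (x : F) : (x ^ q) ^ q = x := by
    rw [← pow_mul, ← sq, ← hF, FiniteField.pow_card]
  have hd' : d ^ q - d ≠ 0 := sub_ne_zero.mpr hd
  -- for `a` fixed by Frobenius the second condition is linear in `a`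
  have key {a : F} (ha : a ^ q = a) :
      (a * d + e) ^ q = a * d + e ↔ a = (e - e ^ q) / (d ^ q - d) := by
    rw [add_pow_char, mul_pow, ha, eq_div_iff hd']
    constructor <;> intro h <;> linear_combination h
  refine ⟨(e - e ^ q) / (d ^ q - d), ?_, fun a ha => (key ha.1).1 ha.2⟩
  have hfix : ((e - e ^ q) / (d ^ q - d)) ^ q = (e - e ^ q) / (d ^ q - d) := by
    rw [div_pow, sub_pow_char, sub_pow_char, frob_frob, frob_frob, ← neg_div_neg_eq,
      neg_sub, neg_sub]
  exact ⟨hfix, (key hfix).2 rfl⟩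

theorem card_filter_pow_ne_self_and_mul_add_pow_eq_self [Fintype F] [DecidableEq F]
    (hF : Fintype.card F = q ^ 2) {d : F} (hd : d ^ q ≠ d) (e : F) :
    #{a : F | a ^ q ≠ a ∧ (a * d + e) ^ q = a * d + e} = q - 1 := by
  have hd0 : d ≠ 0 := by rintro rfl; exact hd (zero_pow (Fact.out : q.Prime).ne_zero)
  have hsplit := card_filter_add_card_filter_not
    (s := {a : F | (a * d + e) ^ q = a * d + e}) (fun a => a ^ q = a)
  rw [card_filter_mul_add_pow_eq_self hd0, filter_filter, filter_filter] at hsplit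
  have hone : #{a : F | (a * d + e) ^ q = a * d + e ∧ a ^ q = a} = 1 := by
    rw [← Fintype.existsUnique_iff_card_one]
    simpa only [and_comm] using existsUnique_pow_eq_self_and_mul_add_pow_eq_self hF hd e
  have hswap : #{a : F | a ^ q ≠ a ∧ (a * d + e) ^ q = a * d + e}
      = #{a : F | (a * d + e) ^ q = a * d + e ∧ ¬a ^ q = a} := by
    simp only [ne_eq, and_comm]
  omega

theorem frobenius_quotient_add_eq_iff {a δ s₀ e z : F} (ha : a ^ q ≠ a)
    (hs₀ : s₀ ^ q = s₀) (hz : z ^ q = z) :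
    ((a * δ) ^ q - a * δ) / (a ^ q - a) + s₀ + (e ^ q - e) / (a ^ q - a) = z ↔
      (a * (δ - (z - s₀)) + e) ^ q = a * (δ - (z - s₀)) + e := by
  have ha' : a ^ q - a ≠ 0 := sub_ne_zero.mpr ha
  simp only [add_pow_char, mul_pow, sub_pow_char, hz, hs₀]
  rw [← sub_eq_zero, ← mul_left_inj' ha', zero_mul]
  constructor <;> intro h
  · field_simp at h
    linear_combination h
  · field_simp
    linear_combination h

end FrobeniusFixed

theorem PMF.uniformOfFinset_bind_map_apply_of_card_filter {α β γ : Type*} [DecidableEq γ]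
    (s : Finset α) (hs : s.Nonempty) (ν : PMF β) (f : α → β → γ) (z : γ) (k : ℕ)
    (hk : ∀ b, #{a ∈ s | f a b = z} = k) :
    ((PMF.uniformOfFinset s hs).bind fun a => ν.map (f a)) z = k / #s := by
  have fiber (b : β) : ∑' a, uniformOfFinset s hs a * (if z = f a b then ν b else 0)
      = k / #s * ν b := by
    rw [tsum_eq_sum (s := s) fun a ha => by simp [ha]]
    calc ∑ a ∈ s, uniformOfFinset s hs a * (if z = f a b then ν b else 0)
        = ∑ a ∈ s with f a b = z, (#s : ENNReal)⁻¹ * ν b := by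
          rw [sum_filter]
          refine sum_congr rfl fun a ha => ?_
          simp [ha, eq_comm]
      _ = k / #s * ν b := by rw [sum_const, hk, nsmul_eq_mul, ← mul_assoc, div_eq_mul_inv]
  simp only [PMF.bind_apply, PMF.map_apply, ← ENNReal.tsum_mul_left]
  rw [ENNReal.tsum_comm, tsum_congr fun b => by convert fiber b, ENNReal.tsum_mul_left,
    ν.tsum_coe, mul_one]

theorem stmt_3_general (q : ℕ) (hq : q.Prime) (F : Type) [Field F] [Fintype F]
    [DecidableEq F] (hF : Fintype.card F = q ^ 2) (δ : F) (hδ : δ ^ q ≠ δ)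
    (s₀ : F) (hs₀ : s₀ ^ q = s₀)
    (A : Finset F) (hA : A = Finset.univ.filter (fun a : F => a ^ q ≠ a)) (hAne : A.Nonempty)
    (ν : PMF F) (z : F) (hz : z ^ q = z) :
    ((PMF.uniformOfFinset A hAne).bind (fun a =>
        ν.map (fun e =>
          ((a * δ) ^ q - a * δ) / (a ^ q - a) + s₀ + (e ^ q - e) / (a ^ q - a)))) z
      = 1 / (q : ENNReal) := by
  have : Fact q.Prime := ⟨hq⟩
  have : CharP F q := charP_of_card_eq_prime_pow hF
  have hd : (δ - (z - s₀)) ^ q ≠ δ - (z - s₀) := by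
    rw [sub_pow_char, sub_pow_char, hz, hs₀, Ne, sub_left_inj]
    exact hδ
  have hA_card : #A = (q - 1) * q := by
    have hsplit := card_filter_add_card_filter_not (s := univ) fun a : F => a ^ q = a
    rw [card_filter_pow_eq_self F q, card_univ, hF] at hsplit
    rw [hA, Nat.sub_mul, one_mul, ← sq]
    simp only [ne_eq]
    omega
  rw [PMF.uniformOfFinset_bind_map_apply_of_card_filter A hAne ν _ z (q - 1) fun e => ?_, hA_card]
  · have hq1 : ((q - 1 : ℕ) : ENNReal) ≠ 0 := Nat.cast_ne_zero.mpr (by have := hq.two_le; omega)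
    conv_lhs => rw [← mul_one ((q - 1 : ℕ) : ENNReal), Nat.cast_mul]
    exact ENNReal.mul_div_mul_left 1 q hq1 (ENNReal.natCast_ne_top _)
  · rw [hA, filter_filter, ← card_filter_pow_ne_self_and_mul_add_pow_eq_self hF hd e]
    exact congrArg card
      (filter_congr fun a _ => and_congr_right (frobenius_quotient_add_eq_iff · hs₀ hz))

/-- For `q` an odd prime, `F = 𝔽_{q²}`, `δ ∈ A_q = F \ 𝔽_q` and `s₀ ∈ 𝔽_q`: if `a` is uniform
on `A_q` and `e` is any `F`-valued random variable (with law `ν`) independent of `a`, then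
`m_δ = ((aδ)^q − aδ)/(a^q − a) + s₀ + (e^q − e)/(a^q − a)` is uniform on `𝔽_q`, i.e. each
element `z` fixed by Frobenius has probability `1/q`. -/
theorem stmt_3 (q : ℕ) (hq : q.Prime) (hodd : Odd q) (F : Type) [Field F] [Fintype F]
    [DecidableEq F] (hF : Fintype.card F = q ^ 2) (δ : F) (hδ : δ ^ q ≠ δ)
    (s₀ : F) (hs₀ : s₀ ^ q = s₀)
    (A : Finset F) (hA : A = Finset.univ.filter (fun a : F => a ^ q ≠ a)) (hAne : A.Nonempty)
    (ν : PMF F) (z : F) (hz : z ^ q = z) :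
    ((PMF.uniformOfFinset A hAne).bind (fun a =>
        ν.map (fun e =>
          ((a * δ) ^ q - a * δ) / (a ^ q - a) + s₀ + (e ^ q - e) / (a ^ q - a)))) z
      = 1 / (q : ENNReal) :=
  stmt_3_general q hq F hF δ hδ s₀ hs₀ A hA hAne ν z hz
end

section
/- Let K = Q(ζ_p, √d) with p odd prime, d > 1 squarefree, d ≡ 2,3 (mod 4), gcd(d,p)=1, and let n = p−1. Let ι be the adjusted canonical embedding of K into R^{2n}. For any e ∈ O_K written as e = e_1 + e_2√d with e_1, e_2 ∈ Z[ζ_p], one has ‖ι(e)‖² = ‖ι_M(e_1)‖² + d·‖ι_M(e_2)‖², where ι_M is the adjusted canonical embedding of M = Q(ζ_p) into R^n (viewed via the 2n embeddings of K). In particular, if e_2 ≠ 0 then ‖ι(e)‖ ≥ √(2nd). -/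
/-!
Each embedding of `ℚ(ζ_p)` into `ℂ` has exactly two extensions to `K`, and they differ by the
sign of `√d`; pairing them, the parallelogram law cancels the cross terms `σ(e₁)·σ(e₂√d)`.
The extension `K / ℚ(ζ_p)` is indeed quadratic: a square root of `d` in `ℚ(ζ_p)` would lie in
`ℤ[ζ_p]`, and since `ℤ[ζ_p] / 2 ≅ 𝔽₂[X] / Φ_p` is reduced for odd `p`, this forces
`4 ∣ d - d²`, which fails for `d ≡ 2, 3 (mod 4)`. The lower bound is AM–GM: the product of the
`|σ(e₂)|²` is `N(e₂)² ≥ 1`.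
-/

open Polynomial Module NumberField IntermediateField

theorem Polynomial.exists_eq_cyclotomic_mul_add_two_mul {m : ℕ} (hm : Odd m) {g f : ℤ[X]}
    (h : cyclotomic m ℤ ∣ g ^ 2 - 2 * f) : ∃ v w : ℤ[X], g = cyclotomic m ℤ * v + 2 * w := by
  have : NeZero (m : ZMod 2) :=
    ⟨by simp [ZMod.natCast_eq_zero_iff_even, Nat.not_even_iff_odd.2 hm]⟩
  have hsq : cyclotomic m (ZMod 2) ∣ (g.map (Int.castRingHom (ZMod 2))) ^ 2 := by
    simpa [map_cyclotomic, show (2 : (ZMod 2)[X]) = 0 from CharTwo.two_eq_zero] using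
      Polynomial.map_dvd (Int.castRingHom (ZMod 2)) h
  obtain ⟨v', hv'⟩ := ((squarefree_cyclotomic m (ZMod 2)).dvd_pow_iff_dvd two_ne_zero).1 hsq
  obtain ⟨v, rfl⟩ := map_surjective (Int.castRingHom (ZMod 2)) ZMod.intCast_surjective v'
  have hker : g - cyclotomic m ℤ * v ∈ RingHom.ker (mapRingHom (Int.castRingHom (ZMod 2))) := by
    simp [hv', map_cyclotomic]
  rw [ker_mapRingHom, ZMod.ker_intCastRingHom, Ideal.map_span, Set.image_singleton,
    Ideal.mem_span_singleton] at hker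
  obtain ⟨w, hw⟩ := hker
  exact ⟨v, w, by rw [← sub_eq_iff_eq_add', hw, Nat.cast_ofNat, C_ofNat]⟩

namespace IsPrimitiveRoot

open scoped Algebra

variable {L : Type*} [Field L] [CharZero L] {m : ℕ} {ζ : L}

theorem exists_eq_two_mul_of_sq_eq_two_mul (hζ : IsPrimitiveRoot ζ m) (hm : Odd m) {z w : L}
    (hz : z ∈ ℤ[ζ]) (hw : w ∈ ℤ[ζ]) (h : z ^ 2 = 2 * w) : ∃ u ∈ ℤ[ζ], z = 2 * u := by
  rw [Algebra.adjoin_singleton_eq_range_aeval] at hz hw ⊢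
  obtain ⟨g, rfl⟩ := hz
  obtain ⟨f, rfl⟩ := hw
  simp only [AlgHom.toRingHom_eq_coe, RingHom.coe_coe] at h
  have hΦ := cyclotomic_eq_minpoly hζ hm.pos
  have hdvd : cyclotomic m ℤ ∣ g ^ 2 - 2 * f := by
    rw [hΦ]
    exact minpoly.isIntegrallyClosed_dvd (hζ.isIntegral hm.pos) (by simp [h, map_ofNat])
  obtain ⟨v, W, rfl⟩ := exists_eq_cyclotomic_mul_add_two_mul hm hdvd
  exact ⟨aeval ζ W, ⟨W, rfl⟩, by simp [hΦ, map_ofNat]⟩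

theorem four_dvd_sub_sq_of_sq_eq [IsCyclotomicExtension {m} ℚ L] (hζ : IsPrimitiveRoot ζ m)
    (hm : Odd m) {d : ℤ} {b : L} (hb : b ^ 2 = d) : 4 ∣ d - d ^ 2 := by
  have : NeZero m := ⟨hm.pos.ne'⟩
  have hR := IsCyclotomicExtension.Rat.isIntegralClosure_adjoin_singleton hζ
  have hbR : b ∈ ℤ[ζ] := by
    obtain ⟨y, hy⟩ := hR.isIntegral_iff.1 (IsIntegral.of_pow two_pos
      (by rw [hb]; exact isIntegral_algebraMap (x := d)))
    exact hy ▸ y.2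
  obtain ⟨k, hk⟩ : (2 : ℤ) ∣ d + d ^ 2 := by
    rw [show d + d ^ 2 = d * (d + 1) by ring]; exact even_iff_two_dvd.1 (Int.even_mul_succ_self d)
  have hkL : (d : L) + d ^ 2 = 2 * k := by exact_mod_cast hk
  -- `(b - d) ^ 2 = d + d ^ 2 - 2 d b`, so `b = d + 2 u` with `u ∈ ℤ[ζ]`
  obtain ⟨u, huR, hu⟩ := hζ.exists_eq_two_mul_of_sq_eq_two_mul hm
    (sub_mem hbR (intCast_mem _ d)) (sub_mem (intCast_mem _ k) (mul_mem (intCast_mem _ d) hbR))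
    (by linear_combination hb + hkL)
  have hq : algebraMap ℚ L ((d - d ^ 2) / 4) = u ^ 2 + d * u := by
    simp only [map_div₀, map_sub, map_pow, map_intCast, map_ofNat]
    rw [div_eq_iff (by norm_num)]
    linear_combination -hb + (b + d + 2 * u) * hu
  have huI : IsIntegral ℤ u := hR.isIntegral_iff.2 ⟨⟨u, huR⟩, rfl⟩
  obtain ⟨q, hq'⟩ := IsIntegrallyClosed.isIntegral_iff.1 ((isIntegral_algebraMap_iff
    (algebraMap ℚ L).injective).1 (hq ▸ (huI.pow 2).add (isIntegral_algebraMap.mul huI)))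
  refine ⟨q, ?_⟩
  have : (q : ℚ) = (d - d ^ 2) / 4 := hq'
  exact_mod_cast (by push_cast; rw [this]; ring : ((d - d ^ 2 : ℤ) : ℚ) = 4 * q)

theorem sq_ne_intCast [IsCyclotomicExtension {m} ℚ L] (hζ : IsPrimitiveRoot ζ m) (hm : Odd m)
    {d : ℤ} (hd : d % 4 = 2 ∨ d % 4 = 3) (b : L) : b ^ 2 ≠ d := fun hb => by
  have h := Int.emod_eq_zero_of_dvd (hζ.four_dvd_sub_sq_of_sq_eq hm hb)
  rw [Int.sub_emod, sq, Int.mul_emod] at h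
  rcases hd with hd | hd <;> simp [hd] at h

end IsPrimitiveRoot

theorem IntermediateField.algebra_adjoin_adjoin_simple_eq_top {R K : Type*} [Field R] [Field K]
    [Algebra R K] {ζ α : K} (h : Algebra.adjoin R {ζ, α} = ⊤) :
    Algebra.adjoin R⟮ζ⟯ {α} = ⊤ := by
  have hζ : ζ ∈ Algebra.adjoin R⟮ζ⟯ {α} :=
    Subalgebra.algebraMap_mem (Algebra.adjoin R⟮ζ⟯ {α}) (⟨ζ, mem_adjoin_simple_self R ζ⟩ : R⟮ζ⟯)
  refine eq_top_iff.2 fun x _ => ?_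
  exact (Algebra.adjoin_le (S := (Algebra.adjoin R⟮ζ⟯ {α}).restrictScalars R)
    (Set.insert_subset hζ (Set.singleton_subset_iff.2 (Algebra.self_mem_adjoin_singleton _ α))))
    (h ▸ Algebra.mem_top : x ∈ Algebra.adjoin R {ζ, α})

section QuadraticExtension

variable {F K : Type*} [Field F] [Field K] [Algebra F K] {α : K} {c : F}

theorem minpoly_eq_X_sq_sub_C (hα : α ^ 2 = algebraMap F K c) (hc : ∀ b : F, b ^ 2 ≠ c) :
    minpoly F α = X ^ 2 - C c :=
  (minpoly.eq_of_irreducible_of_monic (X_pow_sub_C_irreducible_of_prime Nat.prime_two hc)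
    (by simp [hα]) (monic_X_pow_sub_C c two_ne_zero)).symm

theorem isIntegral_of_sq_eq_algebraMap (hα : α ^ 2 = algebraMap F K c) : IsIntegral F α :=
  ⟨X ^ 2 - C c, monic_X_pow_sub_C c two_ne_zero, by simp [hα]⟩

theorem finrank_eq_two_of_sq_eq_algebraMap (hα : α ^ 2 = algebraMap F K c)
    (hc : ∀ b : F, b ^ 2 ≠ c) (hgen : Algebra.adjoin F {α} = ⊤) : finrank F K = 2 := by
  rw [(PowerBasis.ofAdjoinEqTop (isIntegral_of_sq_eq_algebraMap hα) hgen).finrank,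
    PowerBasis.ofAdjoinEqTop_dim, minpoly_eq_X_sq_sub_C hα hc, natDegree_X_pow_sub_C]

theorem RingHom.ext_of_adjoin_singleton_eq_top {L : Type*} [Semiring L]
    (hgen : Algebra.adjoin F {α} = ⊤) {σ τ : K →+* L}
    (hF : σ.comp (algebraMap F K) = τ.comp (algebraMap F K)) (hα : σ α = τ α) : σ = τ := by
  ext x
  induction (hgen ▸ Algebra.mem_top : x ∈ Algebra.adjoin F {α}) using Algebra.adjoin_induction with
  | mem y hy => rwa [Set.mem_singleton_iff.1 hy]
  | algebraMap r => exact RingHom.congr_fun hF r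
  | add x y _ _ hx hy => rw [map_add, map_add, hx, hy]
  | mul x y _ _ hx hy => rw [map_mul, map_mul, hx, hy]

theorem exists_ringHom_apply_eq_neg {L : Type*} [Field L] (hα : α ^ 2 = algebraMap F K c)
    (hc : ∀ b : F, b ^ 2 ≠ c) (hgen : Algebra.adjoin F {α} = ⊤) (σ : K →+* L) :
    ∃ τ : K →+* L, τ.comp (algebraMap F K) = σ.comp (algebraMap F K) ∧ τ α = -σ α := by
  let _ : Algebra F L := (σ.comp (algebraMap F K)).toAlgebra
  let pb := PowerBasis.ofAdjoinEqTop (isIntegral_of_sq_eq_algebraMap hα) hgen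
  have hroot : aeval (-σ α) (minpoly F pb.gen) = 0 := by
    rw [PowerBasis.ofAdjoinEqTop_gen, minpoly_eq_X_sq_sub_C hα hc, map_sub, map_pow, aeval_X,
      aeval_C, RingHom.algebraMap_toAlgebra, RingHom.comp_apply, ← hα, map_pow, neg_sq, sub_self]
  exact ⟨pb.lift (-σ α) hroot, RingHom.ext fun r => (pb.lift (-σ α) hroot).commutes r,
    pb.lift_gen (-σ α) hroot⟩

theorem sum_norm_sq_add_mul_eq [NumberField K] (hα : α ^ 2 = algebraMap F K c)
    (hc : ∀ b : F, b ^ 2 ≠ c) (hgen : Algebra.adjoin F {α} = ⊤) (x y : F) :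
    ∑ σ : K →+* ℂ, ‖σ (algebraMap F K x + algebraMap F K y * α)‖ ^ 2 =
      ∑ σ : K →+* ℂ, (‖σ (algebraMap F K x)‖ ^ 2 + ‖σ (algebraMap F K y)‖ ^ 2 * ‖σ α‖ ^ 2) := by
  choose t htF htα using fun σ : K →+* ℂ => exists_ringHom_apply_eq_neg hα hc hgen σ
  have ht : Function.Involutive t := fun σ =>
    RingHom.ext_of_adjoin_singleton_eq_top hgen (by rw [htF, htF]) (by rw [htα, htα, neg_neg])
  set f : (K →+* ℂ) → ℝ := fun σ => ‖σ (algebraMap F K x + algebraMap F K y * α)‖ ^ 2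
  -- `σ` and `t σ` agree on `F` and differ in the sign of `α`: the parallelogram law applies
  have hpair : ∀ σ, f σ + f (t σ) =
      2 * (‖σ (algebraMap F K x)‖ ^ 2 + ‖σ (algebraMap F K y)‖ ^ 2 * ‖σ α‖ ^ 2) := fun σ => by
    have hx := RingHom.congr_fun (htF σ) x
    have hy := RingHom.congr_fun (htF σ) y
    simp only [RingHom.comp_apply] at hx hy
    simp only [f, map_add, map_mul, hx, hy, htα, mul_neg, ← sub_eq_add_neg,
      parallelogram_law_with_norm ℝ, norm_mul, mul_pow]
  have hsum : ∑ σ, f (t σ) = ∑ σ, f σ := Equiv.sum_comp ht.toPerm f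
  have := Finset.sum_congr rfl fun σ (_ : σ ∈ Finset.univ) => hpair σ
  rw [Finset.sum_add_distrib, hsum, ← Finset.mul_sum] at this
  linarith

end QuadraticExtension

namespace NumberField

variable {K : Type*} [Field K] [NumberField K]

theorem prod_norm_embeddings_eq_abs_norm (x : K) :
    ∏ σ : K →+* ℂ, ‖σ x‖ = |(Algebra.norm ℚ x : ℝ)| := by
  rw [← Complex.norm_ratCast, ← eq_ratCast (algebraMap ℚ ℂ), Algebra.norm_eq_prod_embeddings,
    norm_prod]
  exact Fintype.prod_equiv (RingHom.equivRatAlgHom K ℂ) _ _ fun σ => rfl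

theorem finrank_le_sum_norm_sq_embeddings {x : 𝓞 K} (hx : x ≠ 0) :
    (finrank ℚ K : ℝ) ≤ ∑ σ : K →+* ℂ, ‖σ x‖ ^ 2 := by
  have hN : (1 : ℝ) ≤ ∏ σ : K →+* ℂ, ‖σ x‖ ^ 2 := by
    rw [Finset.prod_pow, prod_norm_embeddings_eq_abs_norm, sq_abs, one_le_sq_iff_one_le_abs,
      ← Algebra.coe_norm_int, Rat.cast_intCast, ← Int.cast_abs, ← Int.cast_one, Int.cast_le]
    exact Int.one_le_abs (Algebra.norm_ne_zero_iff.mpr hx)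
  have hpos : 0 < (finrank ℚ K : ℝ) := by exact_mod_cast finrank_pos
  have hcard : ∑ _σ : K →+* ℂ, (1 : ℝ) = finrank ℚ K := by simp [Embeddings.card]
  -- AM-GM for the numbers `‖σ x‖ ^ 2`, whose product is `N(x) ^ 2 ≥ 1`
  have amgm := Real.geom_mean_le_arith_mean Finset.univ (fun _ => 1) (fun σ : K →+* ℂ => ‖σ x‖ ^ 2)
    (fun _ _ => zero_le_one) (hcard ▸ hpos) fun _ _ => sq_nonneg _
  simp only [Real.rpow_one, one_mul, hcard] at amgm
  have := (Real.one_le_rpow hN (inv_nonneg.2 hpos.le)).trans amgm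
  rwa [le_div_iff₀ hpos, one_mul] at this

end NumberField

theorem stmt_7_general (p : ℕ) (hp : p.Prime) (hpo : Odd p) (d : ℤ) (hd : 1 < d)
    (hd4 : d % 4 = 2 ∨ d % 4 = 3)
    (n : ℕ) (hn : n = p - 1)
    (K : Type) [Field K] [NumberField K]
    (ζ α : K) (hζ : IsPrimitiveRoot ζ p) (hα : α ^ 2 = (d : K))
    (htop : Algebra.adjoin ℚ ({ζ, α} : Set K) = ⊤)
    (e₁ e₂ : K) (he₁ : e₁ ∈ Algebra.adjoin ℤ ({ζ} : Set K))
    (he₂ : e₂ ∈ Algebra.adjoin ℤ ({ζ} : Set K)) :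
    (∑ σ : K →+* ℂ, ‖σ (e₁ + e₂ * α)‖ ^ 2 =
        ∑ σ : K →+* ℂ, ‖σ e₁‖ ^ 2 +
          (d : ℝ) * ∑ σ : K →+* ℂ, ‖σ e₂‖ ^ 2) ∧
      (e₂ ≠ 0 →
        Real.sqrt (∑ σ : K →+* ℂ, ‖σ (e₁ + e₂ * α)‖ ^ 2) ≥
          Real.sqrt (2 * n * (d : ℝ))) := by
  have : NeZero p := ⟨hp.ne_zero⟩
  have : IsCyclotomicExtension {p} ℚ ℚ⟮ζ⟯ := hζ.intermediateField_adjoin_isCyclotomicExtension ℚ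
  have hζF : IsPrimitiveRoot (AdjoinSimple.gen ℚ ζ) p :=
    IsPrimitiveRoot.coe_submonoidClass_iff.mp hζ
  have hc : ∀ b : ℚ⟮ζ⟯, b ^ 2 ≠ d := hζF.sq_ne_intCast hpo hd4
  have hαF : α ^ 2 = algebraMap ℚ⟮ζ⟯ K d := by rw [hα, map_intCast]
  have hgen := algebra_adjoin_adjoin_simple_eq_top htop
  have hZF : Algebra.adjoin ℤ {ζ} ≤ ℚ⟮ζ⟯.toSubalgebra.restrictScalars ℤ :=
    Algebra.adjoin_le (Set.singleton_subset_iff.2 (mem_adjoin_simple_self ℚ ζ))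
  have hnormα : ∀ σ : K →+* ℂ, ‖σ α‖ ^ 2 = d := fun σ => by
    rw [← norm_pow, ← map_pow, hα, map_intCast, Complex.norm_intCast, abs_of_pos (by positivity)]
  have hsplit : ∑ σ : K →+* ℂ, ‖σ (e₁ + e₂ * α)‖ ^ 2 =
      ∑ σ : K →+* ℂ, ‖σ e₁‖ ^ 2 + d * ∑ σ : K →+* ℂ, ‖σ e₂‖ ^ 2 := by
    refine (sum_norm_sq_add_mul_eq hαF hc hgen ⟨e₁, hZF he₁⟩ ⟨e₂, hZF he₂⟩).trans ?_
    simp [hnormα, Finset.sum_add_distrib, Finset.mul_sum, mul_comm]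
  refine ⟨hsplit, fun he₂0 => Real.sqrt_le_sqrt ?_⟩
  have hdeg : finrank ℚ K = 2 * n := by
    rw [← finrank_mul_finrank ℚ ℚ⟮ζ⟯ K, IsCyclotomicExtension.Rat.finrank p,
      finrank_eq_two_of_sq_eq_algebraMap hαF hc hgen, Nat.totient_prime hp, hn, mul_comm]
  have hbound : ((2 * n : ℕ) : ℝ) ≤ ∑ σ : K →+* ℂ, ‖σ e₂‖ ^ 2 :=
    hdeg ▸ finrank_le_sum_norm_sq_embeddings (x := ⟨e₂, adjoin_le_integralClosure
      (hζ.isIntegral hp.pos) he₂⟩) fun h => he₂0 (congrArg ((↑) : 𝓞 K → K) h)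
  push_cast at hbound
  rw [hsplit, mul_comm _ (d : ℝ)]
  linarith [mul_le_mul_of_nonneg_left hbound (by positivity : (0 : ℝ) ≤ d),
    Finset.sum_nonneg fun σ (_ : σ ∈ Finset.univ) => sq_nonneg ‖(σ : K →+* ℂ) e₁‖]

/-- For `K = ℚ(ζ_p, √d)` of degree `2n`, `n = p − 1`, and `e = e₁ + e₂√d` with
`e₁, e₂ ∈ ℤ[ζ_p]`: the adjusted canonical embedding (whose squared norm is the sum of
`|σ(·)|²` over the `2n` embeddings `σ : K → ℂ`) satisfies
`‖ι(e)‖² = ‖ι_M(e₁)‖² + d·‖ι_M(e₂)‖²`; in particular, if `e₂ ≠ 0` then `‖ι(e)‖ ≥ √(2nd)`. -/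
theorem stmt_7 (p : ℕ) (hp : p.Prime) (hpo : Odd p) (d : ℤ) (hd : 1 < d)
    (hsf : Squarefree d) (hcop : IsCoprime d (p : ℤ)) (hd4 : d % 4 = 2 ∨ d % 4 = 3)
    (n : ℕ) (hn : n = p - 1)
    (K : Type) [Field K] [NumberField K]
    (ζ α : K) (hζ : IsPrimitiveRoot ζ p) (hα : α ^ 2 = (d : K))
    (htop : Algebra.adjoin ℚ ({ζ, α} : Set K) = ⊤)
    (e₁ e₂ : K) (he₁ : e₁ ∈ Algebra.adjoin ℤ ({ζ} : Set K))
    (he₂ : e₂ ∈ Algebra.adjoin ℤ ({ζ} : Set K)) :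
    (∑ σ : K →+* ℂ, ‖σ (e₁ + e₂ * α)‖ ^ 2 =
        ∑ σ : K →+* ℂ, ‖σ e₁‖ ^ 2 +
          (d : ℝ) * ∑ σ : K →+* ℂ, ‖σ e₂‖ ^ 2) ∧
      (e₂ ≠ 0 →
        Real.sqrt (∑ σ : K →+* ℂ, ‖σ (e₁ + e₂ * α)‖ ^ 2) ≥
          Real.sqrt (2 * n * (d : ℝ))) :=
  stmt_7_general p hp hpo d hd hd4 n hn K ζ α hζ hα htop e₁ e₂ he₁ he₂
end

section
/- Let m = 2^d be a power of 2, n = m/2, r > 0, and R = Z[ζ_m]. The PLWE distribution on R, obtained by sampling e = Σ_{i=0}^{n-1} e_i ζ_m^i with each e_i drawn independently from the discrete Gaussian D_{Z,r}, equals the non-dual RLWE distribution D_{ι(R), r√n}, i.e., both assign to each x ∈ R probability proportional to exp(−‖ι(x)‖²/(n r²)). -/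
/-!
The complex embeddings of `ℚ(ζ)`, `ζ` a primitive `2n`-th root of unity with `n` a power of `2`,
send `ζ` bijectively onto the odd powers `ξ ^ (2j + 1) = ξ * ω ^ j` of `ξ = exp(2πi/2n)`, where
`ω = ξ²` is a primitive `n`-th root of unity. Hence `∑_σ |σ(∑ xᵢ ζⁱ)|²` is the squared norm of the
discrete Fourier transform of the twisted vector `(xᵢ ξⁱ)ᵢ`, which by Parseval is `n ∑ xᵢ²`.
-/

open scoped ComplexConjugate
open Finset

theorem IsPrimitiveRoot.sum_pow_mul_conj_pow {n : ℕ} {ω : ℂ} (hω : IsPrimitiveRoot ω n)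
    (i i' : Fin n) :
    ∑ j : Fin n, (ω ^ (i : ℕ) * conj (ω ^ (i' : ℕ))) ^ (j : ℕ) = if i = i' then (n : ℂ) else 0 := by
  have hn : n ≠ 0 := i.pos.ne'
  have hnorm : ‖ω ^ (i' : ℕ)‖ = 1 := by rw [norm_pow, hω.norm'_eq_one hn, one_pow]
  rw [← Complex.inv_eq_conj hnorm]
  split_ifs with h
  · subst h
    simp [mul_inv_cancel₀ (pow_ne_zero _ (hω.ne_zero hn))]
  · set c := ω ^ (i : ℕ) * (ω ^ (i' : ℕ))⁻¹
    have hc : c ^ n = 1 := by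
      simp only [c, mul_pow, inv_pow, ← pow_mul, pow_mul', hω.pow_eq_one, one_pow, inv_one, mul_one]
    have hc1 : c ≠ 1 := fun h1 => h <| Fin.ext <| hω.pow_inj i.isLt i'.isLt <|
      (mul_inv_eq_one₀ (pow_ne_zero _ (hω.ne_zero hn))).mp h1
    rw [Fin.sum_univ_eq_sum_range (fun j => c ^ j), geom_sum_eq hc1, hc, sub_self, zero_div]

theorem IsPrimitiveRoot.sum_norm_sq_sum_mul_pow {n : ℕ} {ω : ℂ} (hω : IsPrimitiveRoot ω n)
    (a : Fin n → ℂ) :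
    ∑ j : Fin n, ‖∑ i : Fin n, a i * (ω ^ (j : ℕ)) ^ (i : ℕ)‖ ^ 2 = n * ∑ i, ‖a i‖ ^ 2 := by
  apply Complex.ofReal_injective
  push_cast
  simp_rw [← Complex.mul_conj', map_sum, sum_mul_sum]
  calc ∑ j : Fin n, ∑ i, ∑ i',
        a i * (ω ^ (j : ℕ)) ^ (i : ℕ) * conj (a i' * (ω ^ (j : ℕ)) ^ (i' : ℕ))
      = ∑ i, ∑ i', a i * conj (a i') *
          ∑ j : Fin n, (ω ^ (i : ℕ) * conj (ω ^ (i' : ℕ))) ^ (j : ℕ) := by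
        rw [sum_comm]
        refine sum_congr rfl fun i _ => ?_
        rw [sum_comm]
        refine sum_congr rfl fun i' _ => ?_
        rw [mul_sum]
        refine sum_congr rfl fun j _ => ?_
        simp only [map_mul, map_pow]
        ring
    _ = n * ∑ i, a i * conj (a i) := by
        simp_rw [hω.sum_pow_mul_conj_pow, mul_ite, mul_zero, sum_ite_eq, mem_univ, if_true,
          mul_sum]
        exact sum_congr rfl fun i _ => mul_comm _ _

theorem IsPrimitiveRoot.sum_norm_sq_sum_mul_mul_pow {n : ℕ} {ω c : ℂ} (hω : IsPrimitiveRoot ω n)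
    (hc : ‖c‖ = 1) (a : Fin n → ℂ) :
    ∑ j : Fin n, ‖∑ i : Fin n, a i * (c * ω ^ (j : ℕ)) ^ (i : ℕ)‖ ^ 2 = n * ∑ i, ‖a i‖ ^ 2 := by
  have h := hω.sum_norm_sq_sum_mul_pow fun i => a i * c ^ (i : ℕ)
  simp only [norm_mul, norm_pow, hc, one_pow, mul_one] at h
  rw [← h]
  simp only [mul_pow, mul_assoc]

theorem IsPrimitiveRoot.sum_primitiveRoots_two_pow_succ {R M : Type*} [CommRing R] [IsDomain R]
    [AddCommMonoid M] {k : ℕ} {ξ : R} (hξ : IsPrimitiveRoot ξ (2 ^ (k + 1))) (f : R → M) :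
    ∑ η ∈ primitiveRoots (2 ^ (k + 1)) R, f η = ∑ j : Fin (2 ^ k), f (ξ ^ (2 * (j : ℕ) + 1)) := by
  classical
  have hlt : ∀ j : Fin (2 ^ k), 2 * (j : ℕ) + 1 < 2 ^ (k + 1) := fun j => by
    have := j.isLt; rw [pow_succ]; omega
  have hinj : Function.Injective fun j : Fin (2 ^ k) => ξ ^ (2 * (j : ℕ) + 1) := fun a b hab =>
    Fin.ext (by have := hξ.pow_inj (hlt a) (hlt b) hab; omega)
  have himage : univ.image (fun j : Fin (2 ^ k) => ξ ^ (2 * (j : ℕ) + 1)) =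
      primitiveRoots (2 ^ (k + 1)) R := by
    refine eq_of_subset_of_card_le (fun η hη => ?_) ?_
    · obtain ⟨j, -, rfl⟩ := mem_image.mp hη
      rw [mem_primitiveRoots (by positivity)]
      refine hξ.pow_of_coprime _ (Nat.Coprime.pow_right _ ?_)
      rw [Nat.coprime_two_right]
      exact odd_two_mul_add_one _
    · rw [hξ.card_primitiveRoots, Nat.totient_prime_pow_succ Nat.prime_two,
        card_image_of_injective _ hinj, card_univ, Fintype.card_fin]
      simp
  rw [← himage, sum_image fun a _ b _ hab => hinj hab]

theorem IsCyclotomicExtension.of_adjoin_eq_top {A B : Type*} [CommRing A] [CommRing B]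
    [Algebra A B] {m : ℕ} [NeZero m] {ζ : B} (hζ : IsPrimitiveRoot ζ m)
    (h : Algebra.adjoin A {ζ} = ⊤) : IsCyclotomicExtension {m} A B := by
  refine (IsCyclotomicExtension.iff_singleton m A B).mpr ⟨⟨ζ, hζ⟩, fun x => ?_⟩
  have hsub : ({ζ} : Set B) ⊆ {b : B | b ^ m = 1} :=
    Set.singleton_subset_iff.mpr hζ.pow_eq_one
  exact Algebra.adjoin_mono hsub (h ▸ Algebra.mem_top)

theorem IsPrimitiveRoot.sum_ringHom_complex_eq_sum_primitiveRoots {K M : Type*} [Field K]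
    [NumberField K] [AddCommMonoid M] {m : ℕ} [NeZero m] [IsCyclotomicExtension {m} ℚ K] {ζ : K}
    (hζ : IsPrimitiveRoot ζ m) (f : ℂ → M) :
    ∑ σ : K →+* ℂ, f (σ ζ) = ∑ η ∈ primitiveRoots m ℂ, f η := by
  rw [← sum_coe_sort (primitiveRoots m ℂ)]
  exact Fintype.sum_equiv ((RingHom.equivRatAlgHom K ℂ).trans
    (hζ.embeddingsEquivPrimitiveRoots ℂ (Polynomial.cyclotomic.irreducible_rat (NeZero.pos m))))
    _ _ fun σ => rfl

theorem IsPrimitiveRoot.sum_norm_sq_ringHom_complex_two_pow {K : Type*} [Field K] [NumberField K]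
    {k : ℕ} [IsCyclotomicExtension {2 ^ (k + 1)} ℚ K] {ζ : K}
    (hζ : IsPrimitiveRoot ζ (2 ^ (k + 1))) (x : Fin (2 ^ k) → ℤ) :
    ∑ σ : K →+* ℂ, ‖σ (∑ i : Fin (2 ^ k), (x i : K) * ζ ^ (i : ℕ))‖ ^ 2 =
      2 ^ k * ∑ i, (x i : ℝ) ^ 2 := by
  have hξ := Complex.isPrimitiveRoot_exp (2 ^ (k + 1)) (by positivity)
  set ξ := Complex.exp (2 * Real.pi * Complex.I / (2 ^ (k + 1) : ℕ))
  calc ∑ σ : K →+* ℂ, ‖σ (∑ i : Fin (2 ^ k), (x i : K) * ζ ^ (i : ℕ))‖ ^ 2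
      = ∑ η ∈ primitiveRoots (2 ^ (k + 1)) ℂ, ‖∑ i : Fin (2 ^ k), (x i : ℂ) * η ^ (i : ℕ)‖ ^ 2 := by
        simp only [← hζ.sum_ringHom_complex_eq_sum_primitiveRoots, map_sum, map_mul, map_pow,
          map_intCast]
    _ = ∑ j : Fin (2 ^ k),
          ‖∑ i : Fin (2 ^ k), (x i : ℂ) * (ξ * (ξ ^ 2) ^ (j : ℕ)) ^ (i : ℕ)‖ ^ 2 := by
        rw [hξ.sum_primitiveRoots_two_pow_succ]
        simp only [pow_succ', pow_mul]
    _ = 2 ^ k * ∑ i, (x i : ℝ) ^ 2 := by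
        rw [(hξ.pow (by positivity) (pow_succ' 2 k)).sum_norm_sq_sum_mul_mul_pow
          (hξ.norm'_eq_one (by positivity))]
        simp [Complex.norm_intCast, sq_abs]

theorem stmt_8_general (d : ℕ) (hd : 1 ≤ d) (m n : ℕ) (hm : m = 2 ^ d) (hn : n = m / 2) (r : ℝ)
    (K : Type) [Field K] [NumberField K] (ζ : K) (hζ : IsPrimitiveRoot ζ m)
    (hK : Algebra.adjoin ℚ ({ζ} : Set K) = ⊤) (x : Fin n → ℤ) :
    ∏ i : Fin n, Real.exp (-(x i : ℝ) ^ 2 / r ^ 2) =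
      Real.exp (-(∑ σ : K →+* ℂ, ‖σ (∑ i : Fin n, (x i : K) * ζ ^ (i : ℕ))‖ ^ 2) /
        (n * r ^ 2)) := by
  obtain ⟨k, rfl⟩ : ∃ k, d = k + 1 := ⟨d - 1, by omega⟩
  obtain rfl : n = 2 ^ k := by rw [hn, hm, pow_succ, Nat.mul_div_cancel _ two_pos]
  subst hm
  have := IsCyclotomicExtension.of_adjoin_eq_top hζ hK
  rw [hζ.sum_norm_sq_ringHom_complex_two_pow, ← Real.exp_sum, Nat.cast_pow, Nat.cast_ofNat,
    ← mul_neg, mul_div_mul_left _ _ (by positivity), ← sum_neg_distrib, sum_div]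

/-- For `m = 2^d`, `n = m/2`, `R = ℤ[ζ_m]` and `r > 0`: the PLWE distribution, which assigns
to `x = ∑ x_i ζ^i` probability proportional to `∏ exp(−x_i²/r²)`, equals the non-dual RLWE
distribution `D_{ι(R), r√n}`, which assigns probability proportional to
`exp(−‖ι(x)‖²/(n r²))` where `‖ι(x)‖² = ∑_{σ : K →+* ℂ} |σ(x)|²`. -/
theorem stmt_8 (d : ℕ) (hd : 1 ≤ d) (m n : ℕ) (hm : m = 2 ^ d) (hn : n = m / 2) (r : ℝ)
    (hr : 0 < r) (K : Type) [Field K] [NumberField K] (ζ : K) (hζ : IsPrimitiveRoot ζ m)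
    (hK : Algebra.adjoin ℚ ({ζ} : Set K) = ⊤) (x : Fin n → ℤ) :
    ∏ i : Fin n, Real.exp (-(x i : ℝ) ^ 2 / r ^ 2) =
      Real.exp (-(∑ σ : K →+* ℂ, ‖σ (∑ i : Fin n, (x i : K) * ζ ^ (i : ℕ))‖ ^ 2) /
        (n * r ^ 2)) :=
  stmt_8_general d hd m n hm hn r K ζ hζ hK x
end

section
/- Let ω_1, ..., ω_m be real numbers, L = Π_{j=1}^m (1 − exp(2πi ω_j)) and S = Σ_{j=1}^m exp(2πi ω_j). Then |L| ≤ 2^{m/2} (1 + |S|/m)^{m/2}. -/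
/-!
For a unit complex number `z` one has `‖1 - z‖² = 2 (1 - Re z)`, so summing over the factors gives
`∑ ‖1 - z_j‖² = 2 (m - Re S) ≤ 2 (m + ‖S‖)`. The AM-GM inequality applied to the `m` numbers
`‖1 - z_j‖²` bounds `‖L‖²` by the `m`-th power of their mean, and taking square roots gives the claim.
-/

open Finset

theorem Real.prod_le_sum_div_card_pow {ι : Type*} (s : Finset ι) (a : ι → ℝ)
    (ha : ∀ i ∈ s, 0 ≤ a i) : ∏ i ∈ s, a i ≤ ((∑ i ∈ s, a i) / #s) ^ #s := by
  rcases s.eq_empty_or_nonempty with rfl | hs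
  · simp
  have hn : (0 : ℝ) < #s := by exact_mod_cast hs.card_pos
  have hmean : (∏ i ∈ s, a i) ^ (#s : ℝ)⁻¹ ≤ (∑ i ∈ s, a i) / #s := by
    rw [← Real.finsetProd_rpow s a ha]
    calc ∏ i ∈ s, a i ^ (#s : ℝ)⁻¹ ≤ ∑ i ∈ s, (#s : ℝ)⁻¹ * a i :=
          Real.geom_mean_le_arith_mean_weighted s _ _ (fun _ _ => by positivity)
            (by simp [hn.ne']) ha
      _ = (∑ i ∈ s, a i) / #s := by rw [← mul_sum, inv_mul_eq_div]
  calc ∏ i ∈ s, a i = ((∏ i ∈ s, a i) ^ (#s : ℝ)⁻¹) ^ #s := by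
        rw [← Real.rpow_natCast, ← Real.rpow_mul (prod_nonneg ha), inv_mul_cancel₀ hn.ne',
          Real.rpow_one]
    _ ≤ ((∑ i ∈ s, a i) / #s) ^ #s := pow_le_pow_left₀ (Real.rpow_nonneg (prod_nonneg ha) _) hmean _

theorem Complex.norm_one_sub_sq_of_norm_eq_one {z : ℂ} (hz : ‖z‖ = 1) :
    ‖1 - z‖ ^ 2 = 2 * (1 - z.re) := by
  have hre_im : z.re * z.re + z.im * z.im = 1 := by
    rw [← Complex.normSq_apply, ← Complex.sq_norm, hz, one_pow]
  rw [Complex.sq_norm, Complex.normSq_apply]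
  simp only [Complex.sub_re, Complex.one_re, Complex.sub_im, Complex.one_im]
  linear_combination hre_im

theorem sum_norm_one_sub_sq_le {ι : Type*} (s : Finset ι) (z : ι → ℂ)
    (hz : ∀ i ∈ s, ‖z i‖ = 1) :
    ∑ i ∈ s, ‖1 - z i‖ ^ 2 ≤ 2 * (#s + ‖∑ i ∈ s, z i‖) := by
  have hsum : ∑ i ∈ s, ‖1 - z i‖ ^ 2 = 2 * (#s - (∑ i ∈ s, z i).re) := by
    rw [sum_congr rfl fun i hi => Complex.norm_one_sub_sq_of_norm_eq_one (hz i hi),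
      ← mul_sum, sum_sub_distrib, Complex.re_sum]
    simp
  rw [hsum]
  linarith [neg_le_of_abs_le (Complex.abs_re_le_norm (∑ i ∈ s, z i))]

theorem norm_prod_one_sub_le_of_norm_eq_one {ι : Type*} (s : Finset ι) (z : ι → ℂ)
    (hz : ∀ i ∈ s, ‖z i‖ = 1) :
    ‖∏ i ∈ s, (1 - z i)‖ ≤ (2 * (1 + ‖∑ i ∈ s, z i‖ / #s)) ^ ((#s : ℝ) / 2) := by
  set S := ∑ i ∈ s, z i
  set c := 2 * (1 + ‖S‖ / #s)
  have hc : 0 ≤ c := by positivity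
  have hmean : (∑ i ∈ s, ‖1 - z i‖ ^ 2) / #s ≤ c :=
    calc (∑ i ∈ s, ‖1 - z i‖ ^ 2) / #s ≤ 2 * (#s + ‖S‖) / #s := by
          gcongr; exact sum_norm_one_sub_sq_le s z hz
      -- `#s / #s` is `0`, not `1`, when `s` is empty
      _ = 2 * ((#s : ℝ) / #s + ‖S‖ / #s) := by ring
      _ ≤ c := mul_le_mul_of_nonneg_left (add_le_add_left (div_self_le_one _) _) zero_le_two
  have hsq : ‖∏ i ∈ s, (1 - z i)‖ ^ 2 ≤ c ^ #s :=
    calc ‖∏ i ∈ s, (1 - z i)‖ ^ 2 = ∏ i ∈ s, ‖1 - z i‖ ^ 2 := by rw [norm_prod, prod_pow]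
      _ ≤ ((∑ i ∈ s, ‖1 - z i‖ ^ 2) / #s) ^ #s :=
          Real.prod_le_sum_div_card_pow s _ fun _ _ => by positivity
      _ ≤ c ^ #s := pow_le_pow_left₀ (by positivity) hmean _
  calc ‖∏ i ∈ s, (1 - z i)‖ = √(‖∏ i ∈ s, (1 - z i)‖ ^ 2) := (Real.sqrt_sq (norm_nonneg _)).symm
    _ ≤ √(c ^ #s) := Real.sqrt_le_sqrt hsq
    _ = c ^ ((#s : ℝ) / 2) := by
      rw [Real.sqrt_eq_rpow, ← Real.rpow_natCast, ← Real.rpow_mul hc]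
      ring_nf

theorem stmt_13_general (m : ℕ) (ω : Fin m → ℝ) :
    ‖(∏ j : Fin m, (1 - Complex.exp (2 * Real.pi * Complex.I * (ω j))))‖ ≤
      (2 * (1 + ‖(∑ j : Fin m,
        Complex.exp (2 * Real.pi * Complex.I * (ω j)))‖ / m)) ^ ((m : ℝ) / 2) := by
  have hunit : ∀ j ∈ (univ : Finset (Fin m)),
      ‖Complex.exp (2 * Real.pi * Complex.I * (ω j))‖ = 1 := fun j _ => by
    rw [show 2 * Real.pi * Complex.I * (ω j) = ((2 * Real.pi * ω j : ℝ) : ℂ) * Complex.I by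
      push_cast; ring]
    exact Complex.norm_exp_ofReal_mul_I _
  have h := norm_prod_one_sub_le_of_norm_eq_one univ _ hunit
  rwa [card_univ, Fintype.card_fin] at h

/-- Shparlinski's inequality: for real numbers `ω_1, …, ω_m`, with
`L = ∏_j (1 − e^{2πiω_j})` and `S = ∑_j e^{2πiω_j}`, one has
`|L| ≤ 2^{m/2}(1 + |S|/m)^{m/2}`. -/
theorem stmt_13 (m : ℕ) (hm : 0 < m) (ω : Fin m → ℝ) :
    ‖(∏ j : Fin m, (1 - Complex.exp (2 * Real.pi * Complex.I * (ω j))))‖ ≤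
      (2 * (1 + ‖(∑ j : Fin m,
        Complex.exp (2 * Real.pi * Complex.I * (ω j)))‖ / m)) ^ ((m : ℝ) / 2) :=
  stmt_13_general m ω
end

section
/- Let q be an odd prime, m an even integer with m | q − 1, and α an element of order m in F_q^×. Then |Σ_{j=0}^{m−1} exp(2πi α^j y / q)| ≤ √q for every nonzero y ∈ F_q, where α^j y is interpreted via integer lifts. -/
/-!
Write `f z = ∑_{j<m} ψ (α ^ j * z)`. Since the powers `α ^ j`, `j < m`, are distinct, orthogonality
of the primitive character `ψ` gives Parseval's identity `∑_z ‖f z‖² = q m`. The function `f` is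
constant on the orbit `{α ^ j * y}` of `y ≠ 0`, which has `m` elements and avoids `0`, where
`f 0 = m`. Hence `m² + m ‖f y‖² ≤ q m`, i.e. `‖f y‖² ≤ q - m`.
-/

open Finset

section OrbitSum

variable {R K : Type*} [CommRing R] [RCLike K]

def orbitSum (ψ : AddChar R K) (α : R) (m : ℕ) (z : R) : K :=
  ∑ j ∈ range m, ψ (α ^ j * z)

lemma orbitSum_mul_of_pow_eq_one (ψ : AddChar R K) {α : R} {m : ℕ} (hαm : α ^ m = 1) (z : R) :
    orbitSum ψ α m (α * z) = orbitSum ψ α m z := by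
  have shifted := sum_range_succ' (fun j ↦ ψ (α ^ j * z)) m
  rw [sum_range_succ, hαm] at shifted
  simp only [orbitSum, ← mul_assoc, ← pow_succ]
  simpa using shifted.symm

lemma orbitSum_pow_mul_of_pow_eq_one (ψ : AddChar R K) {α : R} {m : ℕ} (hαm : α ^ m = 1)
    (k : ℕ) (z : R) : orbitSum ψ α m (α ^ k * z) = orbitSum ψ α m z := by
  induction k with
  | zero => rw [pow_zero, one_mul]
  | succ k ih => rw [pow_succ', mul_assoc, orbitSum_mul_of_pow_eq_one ψ hαm, ih]

variable [Fintype R]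

lemma sum_sq_norm_orbitSum [DecidableEq R] {ψ : AddChar R K} (hψ : ψ.IsPrimitive) {α : R}
    {m : ℕ} (hα : orderOf α = m) :
    ∑ z, ‖orbitSum ψ α m z‖ ^ 2 = Fintype.card R * m := by
  have hinj : ∀ j ∈ range m, ∀ k ∈ range m, α ^ j = α ^ k ↔ j = k := fun j hj k hk ↦
    ⟨fun h ↦ pow_injOn_Iio_orderOf (by simpa [hα] using hj) (by simpa [hα] using hk) h,
      fun h ↦ h ▸ rfl⟩
  have expand : ∀ z, (‖orbitSum ψ α m z‖ ^ 2 : K) =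
      ∑ j ∈ range m, ∑ k ∈ range m, ψ (z * (α ^ j - α ^ k)) := fun z ↦ by
    rw [← RCLike.mul_conj, orbitSum, map_sum, sum_mul_sum]
    refine sum_congr rfl fun j _ ↦ sum_congr rfl fun k _ ↦ ?_
    rw [← AddChar.map_neg_eq_conj, ← AddChar.map_add_eq_mul]
    ring_nf
  apply RCLike.ofReal_injective (K := K)
  push_cast
  simp_rw [expand]
  calc ∑ z, ∑ j ∈ range m, ∑ k ∈ range m, ψ (z * (α ^ j - α ^ k))
      = ∑ j ∈ range m, ∑ k ∈ range m, ∑ z, ψ (z * (α ^ j - α ^ k)) := by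
        simp_rw [sum_comm (s := univ)]
    _ = ∑ j ∈ range m, ∑ k ∈ range m, if j = k then (Fintype.card R : K) else 0 := by
        refine sum_congr rfl fun j hj ↦ sum_congr rfl fun k hk ↦ ?_
        simp [AddChar.sum_mulShift _ hψ, sub_eq_zero, hinj j hj k hk]
    _ = Fintype.card R * m := by
        rw [sum_congr rfl fun j hj ↦ by rw [sum_ite_eq, if_pos hj]]
        simp [mul_comm]

end OrbitSum

section Field

variable {F K : Type*} [Field F] [Fintype F] [RCLike K] {ψ : AddChar F K} {α : F} {m : ℕ}

lemma natCast_add_sq_norm_orbitSum_le (hψ : ψ.IsPrimitive) (hα : orderOf α = m) {y : F}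
    (hy : y ≠ 0) : m + ‖orbitSum ψ α m y‖ ^ 2 ≤ Fintype.card F := by
  classical
  obtain rfl | hm := Nat.eq_zero_or_pos m
  · simp [orbitSum]
  have hαm : α ^ m = 1 := hα ▸ pow_orderOf_eq_one α
  have hα0 : α ≠ 0 := by rintro rfl; simp [hm.ne'] at hαm
  have hinj : Set.InjOn (fun j ↦ α ^ j * y) (range m) := fun j hj k hk h ↦
    pow_injOn_Iio_orderOf (by simpa [hα] using hj) (by simpa [hα] using hk)
      (mul_right_cancel₀ hy h)
  set orbit := (range m).image fun j ↦ α ^ j * y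
  have h0 : (0 : F) ∉ orbit := by simp [orbit, hα0, hy]
  have horbit : ∑ z ∈ orbit, ‖orbitSum ψ α m z‖ ^ 2 = m * ‖orbitSum ψ α m y‖ ^ 2 := by
    simp [orbit, sum_image hinj, orbitSum_pow_mul_of_pow_eq_one ψ hαm]
  have hzero : ‖orbitSum ψ α m 0‖ = m := by simp [orbitSum]
  have hle : ∑ z ∈ insert 0 orbit, ‖orbitSum ψ α m z‖ ^ 2 ≤ ∑ z, ‖orbitSum ψ α m z‖ ^ 2 :=
    sum_le_sum_of_subset_of_nonneg (subset_univ _) fun _ _ _ ↦ sq_nonneg _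
  rw [sum_insert h0, horbit, hzero, sum_sq_norm_orbitSum hψ hα] at hle
  have hm' : (0 : ℝ) < m := by exact_mod_cast hm
  nlinarith

lemma norm_orbitSum_le_sqrt_card (hψ : ψ.IsPrimitive) (hα : orderOf α = m) {y : F}
    (hy : y ≠ 0) : ‖orbitSum ψ α m y‖ ≤ √(Fintype.card F) := by
  rw [Real.le_sqrt (norm_nonneg _) (Nat.cast_nonneg _)]
  linarith [natCast_add_sq_norm_orbitSum_le hψ hα hy, (m.cast_nonneg : (0 : ℝ) ≤ m)]

end Field

theorem stmt_16_general (q m : ℕ) (hq : q.Prime)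
    (α : ZMod q) (hα : orderOf α = m) (y : ZMod q) (hy : y ≠ 0) :
    ‖(∑ j ∈ Finset.range m,
        Complex.exp (2 * Real.pi * Complex.I * (((α ^ j * y).val : ℝ)) / q))‖ ≤
      Real.sqrt q := by
  have : Fact q.Prime := ⟨hq⟩
  have hsum : ∑ j ∈ Finset.range m,
      Complex.exp (2 * Real.pi * Complex.I * (((α ^ j * y).val : ℝ)) / q) =
      orbitSum ZMod.stdAddChar α m y := by
    refine sum_congr rfl fun j _ ↦ ?_
    rw [ZMod.stdAddChar_apply, ZMod.toCircle_apply]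
    norm_cast
  rw [hsum]
  simpa using norm_orbitSum_le_sqrt_card (ZMod.isPrimitive_stdAddChar q) hα hy

/-- Gauss-sum bound for subgroup exponential sums: for `q` an odd prime, `m` even with
`m ∣ q − 1`, and `α` of order `m` in `𝔽_q^×`,
`|∑_{j=0}^{m−1} e^{2πi α^j y / q}| ≤ √q` for every nonzero `y ∈ 𝔽_q`
(with `α^j y` interpreted via integer lifts). -/
theorem stmt_16 (q m : ℕ) (hq : q.Prime) (hodd : Odd q) [NeZero q] (hme : Even m)
    (hdvd : m ∣ q - 1) (α : ZMod q) (hα : orderOf α = m) (y : ZMod q) (hy : y ≠ 0) :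
    ‖(∑ j ∈ Finset.range m,
        Complex.exp (2 * Real.pi * Complex.I * (((α ^ j * y).val : ℝ)) / q))‖ ≤
      Real.sqrt q :=
  stmt_16_general q m hq α hα y hy
end

section
/- Let q be prime, m a power of 2, q ≡ 1 (mod m), q < m², n = m/2, α of order m in F_q^×, and y ∈ F_q nonzero. Set β = (1 + √q/m)/2. Then 0 < β < 1 and |Π_{i=0}^{n−1} cos(α^i π y / q)| ≤ β^{n/2}. -/
/-!
With `ψ` the standard additive character of `ZMod q`, `cos² (α^i π y / q) = (1 + Re ψ(α^i y)) / 2`.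
Since `α^n = -1` and `Re ψ` is even, the `m = 2n` factors `i < m` give the square of the product
over `i < n`, i.e. the fourth power of the cosine product. By AM-GM that product of `m` factors is
at most `((1 + Re S / m) / 2)^m`, where `S = ∑_{i<m} ψ(α^i y)` is a Gauss period. `S` is constant on
the orbit `y⟨α⟩`, and by orthogonality of characters the second moments of all Gauss periods add
up to `m q`; comparing with the contributions of the disjoint orbits of `0` and `y` gives
`|S|² ≤ q`, hence the bound `β^m`.
-/

open Finset

theorem Real.prod_le_mean_pow {ι : Type*} (s : Finset ι) (f : ι → ℝ) (hf : ∀ i ∈ s, 0 ≤ f i) :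
    ∏ i ∈ s, f i ≤ ((∑ i ∈ s, f i) / #s) ^ #s := by
  rcases s.eq_empty_or_nonempty with rfl | hs
  · simp
  have hcard : (0 : ℝ) < #s := by exact_mod_cast hs.card_pos
  have hw : ∑ _i ∈ s, (#s : ℝ)⁻¹ = 1 := by
    rw [sum_const, nsmul_eq_mul, mul_inv_cancel₀ hcard.ne']
  have hamgm := Real.geom_mean_le_arith_mean_weighted s (fun _ => (#s : ℝ)⁻¹) f
    (fun _ _ => by positivity) hw hf
  rw [← mul_sum, inv_mul_eq_div] at hamgm
  calc ∏ i ∈ s, f i = (∏ i ∈ s, f i ^ (#s : ℝ)⁻¹) ^ #s := by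
        rw [← prod_pow]
        refine prod_congr rfl fun i hi => ?_
        rw [← Real.rpow_natCast, ← Real.rpow_mul (hf i hi), inv_mul_cancel₀ hcard.ne',
          Real.rpow_one]
    _ ≤ _ := pow_le_pow_left₀ (prod_nonneg fun i hi => Real.rpow_nonneg (hf i hi) _) hamgm _

theorem Finset.prod_range_two_mul_of_pow_eq_neg_one {R M : Type*} [Ring R] [CommMonoid M]
    {α : R} {n : ℕ} (hα : α ^ n = -1) (f : R → M) (hf : ∀ x, f (-x) = f x) (y : R) :
    ∏ i ∈ range (2 * n), f (α ^ i * y) = (∏ i ∈ range n, f (α ^ i * y)) ^ 2 := by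
  rw [two_mul, prod_range_add, sq]
  congr 1
  refine prod_congr rfl fun i _ => ?_
  rw [pow_add, hα, neg_one_mul, neg_mul, hf]

namespace AddChar

section CommRing

variable {F : Type*} [CommRing F] (ψ : AddChar F ℂ)

noncomputable def gaussPeriod (α y : F) : ℂ :=
  ∑ i ∈ range (orderOf α), ψ (α ^ i * y)

lemma gaussPeriod_mul_left (α y : F) : ψ.gaussPeriod α (α * y) = ψ.gaussPeriod α y := by
  have h := sum_range_succ' (fun i => ψ (α ^ i * y)) (orderOf α)
  rw [sum_range_succ, pow_orderOf_eq_one, pow_zero, add_left_inj] at h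
  simp only [gaussPeriod, ← mul_assoc, ← pow_succ]
  exact h.symm

lemma gaussPeriod_pow_mul (α y : F) (k : ℕ) :
    ψ.gaussPeriod α (α ^ k * y) = ψ.gaussPeriod α y := by
  induction k with
  | zero => rw [pow_zero, one_mul]
  | succ k ih => rw [pow_succ', mul_assoc, gaussPeriod_mul_left, ih]

lemma gaussPeriod_zero (α : F) : ψ.gaussPeriod α 0 = orderOf α := by
  simp [gaussPeriod]

theorem sum_sq_norm_gaussPeriod [Fintype F] (hψ : ψ.IsPrimitive) (α : F) :
    ∑ z, ‖ψ.gaussPeriod α z‖ ^ 2 = orderOf α * Fintype.card F := by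
  classical
  set m := orderOf α
  have expand (z : F) : (‖ψ.gaussPeriod α z‖ : ℂ) ^ 2 =
      ∑ i ∈ range m, ∑ j ∈ range m, ψ (z * (α ^ i - α ^ j)) := by
    rw [← Complex.mul_conj', gaussPeriod, map_sum, sum_mul_sum]
    refine sum_congr rfl fun i _ => sum_congr rfl fun j _ => ?_
    rw [← map_neg_eq_conj, ← map_add_eq_mul]
    ring_nf
  have orthogonality (i j : ℕ) (hi : i ∈ range m) (hj : j ∈ range m) :
      ∑ z, ψ (z * (α ^ i - α ^ j)) = if i = j then (Fintype.card F : ℂ) else 0 := by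
    rw [sum_mulShift _ hψ, sub_eq_zero, pow_injOn_Iio_orderOf.eq_iff (mem_range.mp hi)
      (mem_range.mp hj), Nat.cast_ite, Nat.cast_zero]
    congr
  apply Complex.ofReal_injective
  push_cast
  rw [sum_congr rfl fun z _ => expand z, sum_comm]
  simp_rw [sum_comm (s := univ)]
  rw [sum_congr rfl fun i hi => sum_congr rfl fun j hj => orthogonality i j hi hj,
    sum_congr rfl fun i hi => by rw [sum_ite_eq, if_pos hi], sum_const, card_range, nsmul_eq_mul]

end CommRing

section Field

variable {F : Type*} [Field F] [Fintype F] {ψ : AddChar F ℂ}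

theorem IsPrimitive.sq_norm_gaussPeriod_le (hψ : ψ.IsPrimitive) (α : F) {y : F} (hy : y ≠ 0) :
    ‖ψ.gaussPeriod α y‖ ^ 2 ≤ Fintype.card F := by
  classical
  set m := orderOf α
  rcases Nat.eq_zero_or_pos m with hm | hm
  · simp [gaussPeriod, m, hm]
  have hα : α ≠ 0 := by
    rintro rfl
    simp [m] at hm
  set orbit := (range m).image (fun i => α ^ i * y)
  have zero_notMem : (0 : F) ∉ orbit := by
    simp only [orbit, mem_image, not_exists, not_and]
    exact fun i _ => mul_ne_zero (pow_ne_zero i hα) hy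
  have sum_orbit : ∑ z ∈ orbit, ‖ψ.gaussPeriod α z‖ ^ 2 = m * ‖ψ.gaussPeriod α y‖ ^ 2 := by
    rw [sum_image fun i hi j hj hij => pow_injOn_Iio_orderOf (mem_range.mp hi) (mem_range.mp hj)
      (mul_right_cancel₀ hy hij)]
    simp only [gaussPeriod_pow_mul, sum_const, card_range, nsmul_eq_mul, m]
  have hsub : ∑ z ∈ insert 0 orbit, ‖ψ.gaussPeriod α z‖ ^ 2 ≤ m * Fintype.card F := by
    rw [← sum_sq_norm_gaussPeriod ψ hψ]
    exact sum_le_sum_of_subset_of_nonneg (subset_univ _) fun _ _ _ => by positivity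
  rw [sum_insert zero_notMem, sum_orbit, gaussPeriod_zero, Complex.norm_natCast] at hsub
  have hmR : (0 : ℝ) < m := by exact_mod_cast hm
  nlinarith

theorem IsPrimitive.prod_one_add_re_div_two_le (hψ : ψ.IsPrimitive) {α y : F} (hy : y ≠ 0)
    (hα : orderOf α ≠ 0) :
    ∏ i ∈ range (orderOf α), (1 + (ψ (α ^ i * y)).re) / 2 ≤
      ((1 + √(Fintype.card F) / orderOf α) / 2) ^ orderOf α := by
  set m := orderOf α
  have hnonneg (x : F) : 0 ≤ (1 + (ψ x).re) / 2 := by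
    have := neg_le_of_abs_le ((Complex.abs_re_le_norm (ψ x)).trans_eq (ψ.norm_apply x))
    linarith
  have hre : (ψ.gaussPeriod α y).re ≤ √(Fintype.card F) :=
    (Complex.re_le_norm _).trans <|
      (le_abs_self _).trans (Real.abs_le_sqrt (hψ.sq_norm_gaussPeriod_le α hy))
  have hmean : (∑ i ∈ range m, (1 + (ψ (α ^ i * y)).re) / 2) / m =
      (1 + (ψ.gaussPeriod α y).re / m) / 2 := by
    rw [← sum_div, sum_add_distrib, ← Complex.re_sum]
    simp only [sum_const, card_range, nsmul_eq_mul, mul_one]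
    field_simp
    rfl
  refine (Real.prod_le_mean_pow _ _ fun i _ => hnonneg _).trans ?_
  rw [card_range]
  refine pow_le_pow_left₀ (div_nonneg (sum_nonneg fun i _ => hnonneg _) (Nat.cast_nonneg _)) ?_ m
  rw [hmean]
  gcongr

end Field

end AddChar

theorem Real.abs_le_rpow_div_two_of_pow_four_le {x β : ℝ} (hβ : 0 ≤ β) {n : ℕ}
    (h : x ^ 4 ≤ β ^ (2 * n)) : |x| ≤ β ^ ((n : ℝ) / 2) := by
  have hβ4 : (β ^ ((n : ℝ) / 2)) ^ 4 = β ^ (2 * n) := by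
    rw [← Real.rpow_natCast, ← Real.rpow_mul hβ, ← Real.rpow_natCast]
    push_cast
    ring_nf
  rwa [← pow_le_pow_iff_left₀ (abs_nonneg x) (by positivity) four_ne_zero, hβ4, pow_abs,
    abs_of_nonneg (by positivity)]

open Real in
theorem ZMod.cos_sq_val_mul_pi_mul_val_div {q : ℕ} [NeZero q] (a b : ZMod q) :
    cos (a.val * π * b.val / q) ^ 2 = (1 + (stdAddChar (a * b)).re) / 2 := by
  have hab : a * b = (((a.val * b.val : ℕ) : ℤ) : ZMod q) := by simp
  have harg : 2 * π * Complex.I * (((a.val * b.val : ℕ) : ℤ) : ℂ) / q =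
      ((2 * (a.val * π * b.val / q) : ℝ) : ℂ) * Complex.I := by
    push_cast
    ring
  rw [hab, stdAddChar_coe, harg, Complex.exp_ofReal_mul_I_re, cos_sq]
  ring

theorem stmt_17_general (q m n : ℕ) (hq : q.Prime) (hm : ∃ d : ℕ, m = 2 ^ d)
    (hqm : q % m = 1) (hq2 : q < m ^ 2) (hn : n = m / 2) (α : ZMod q) (hα : orderOf α = m)
    (y : ZMod q) (hy : y ≠ 0) (β : ℝ) (hβ : β = (1 + Real.sqrt q / m) / 2) :
    (0 < β ∧ β < 1) ∧
      |∏ i ∈ Finset.range n, Real.cos (((α ^ i).val : ℝ) * Real.pi * (y.val : ℝ) / q)| ≤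
        β ^ ((n : ℝ) / 2) := by
  have := Fact.mk hq
  have hm0 : m ≠ 0 := by rintro rfl; simp [hq.ne_one] at hqm
  have hmn : m = 2 * n := by
    obtain ⟨d, rfl⟩ := hm
    have hd : d ≠ 0 := by rintro rfl; omega
    have := dvd_pow_self 2 hd
    omega
  have hmR : (0 : ℝ) < m := by positivity
  have hβpos : 0 < β := by rw [hβ]; positivity
  have hsqrt : √q / m < 1 := by
    rw [div_lt_one hmR, Real.sqrt_lt' hmR]
    exact_mod_cast hq2
  refine ⟨⟨hβpos, by rw [hβ]; linarith⟩, Real.abs_le_rpow_div_two_of_pow_four_le hβpos.le ?_⟩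
  have hαn : α ^ n = -1 :=
    ((IsPrimitiveRoot.orderOf α).pow (by omega) (by rw [hα, hmn, mul_comm])).eq_neg_one_of_two_right
  have key := (ZMod.isPrimitive_stdAddChar q).prod_one_add_re_div_two_le hy (hα ▸ hm0)
  rw [ZMod.card, hα, ← hβ, hmn] at key
  calc (∏ i ∈ range n, Real.cos (((α ^ i).val : ℝ) * Real.pi * (y.val : ℝ) / q)) ^ 4
      = (∏ i ∈ range n, (1 + (ZMod.stdAddChar (α ^ i * y)).re) / 2) ^ 2 := by
        rw [← prod_pow, ← prod_pow]
        exact prod_congr rfl fun i _ => by rw [← ZMod.cos_sq_val_mul_pi_mul_val_div, ← pow_mul]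
    _ = ∏ i ∈ range (2 * n), (1 + (ZMod.stdAddChar (α ^ i * y)).re) / 2 :=
      (prod_range_two_mul_of_pow_eq_neg_one hαn (fun x => (1 + (ZMod.stdAddChar x).re) / 2)
        (fun x => by simp [AddChar.map_neg_eq_conj]) y).symm
    _ ≤ β ^ (2 * n) := key

/-- For `q` prime, `m` a power of 2, `q ≡ 1 (mod m)`, `q < m²`, `n = m/2`, `α` of order `m`
in `𝔽_q^×`, `y ≠ 0`, and `β = (1 + √q/m)/2`: one has `0 < β < 1` and
`|∏_{i<n} cos(α^i π y / q)| ≤ β^{n/2}` (powers of `α` via integer lifts). -/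
theorem stmt_17 (q m n : ℕ) (hq : q.Prime) [NeZero q] (hm : ∃ d : ℕ, m = 2 ^ d)
    (hqm : q % m = 1) (hq2 : q < m ^ 2) (hn : n = m / 2) (α : ZMod q) (hα : orderOf α = m)
    (y : ZMod q) (hy : y ≠ 0) (β : ℝ) (hβ : β = (1 + Real.sqrt q / m) / 2) :
    (0 < β ∧ β < 1) ∧
      |∏ i ∈ Finset.range n, Real.cos (((α ^ i).val : ℝ) * Real.pi * (y.val : ℝ) / q)| ≤
        β ^ ((n : ℝ) / 2) :=
  stmt_17_general q m n hq hm hqm hq2 hn α hα y hy β hβ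
end
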